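/- arXiv:2009.08521 — 7 statements merged into one kernel-verified Lean document; each statement's English description precedes it below -/
import Mathlib

section
/- There exist constants M, M̃ > 0 and c₀, c̃₀ ≥ 0, independent of s, such that for every s ∈ ℂ, every classical solution x of the port-Hamiltonian eigenvalue ODE, and every ζ ∈ [0,1]: M̃·e^{-|Re s|·c̃₀·ζ}·‖x(0)‖ ≤ ‖x(ζ)‖ ≤ M·e^{|Re s|·c₀·ζ}·‖x(0)‖, where ‖·‖ is the Euclidean norm on ℂ^d. (Lemma 5.1.) -/
open Matrix Set
open scoped ComplexOrder

/-- `x : ℝ → ℂ^d` is a classical solution of the port-Hamiltonian eigenvalue ODE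
`s·x(ζ) = P₁·(𝓗x)'(ζ) + P₀·(𝓗x)(ζ)` on `[0,1]`: the map `u := 𝓗·x` is continuously
differentiable on `[0,1]` and the equation holds there. -/
def IsClassicalSolution {d : ℕ} (P₁ P₀ : Matrix (Fin d) (Fin d) ℂ)
    (𝓗 : ℝ → Matrix (Fin d) (Fin d) ℂ) (s : ℂ)
    (x : ℝ → EuclideanSpace ℂ (Fin d)) : Prop :=
  ∃ u' : ℝ → EuclideanSpace ℂ (Fin d),
    ContinuousOn u' (Set.Icc 0 1) ∧
    (∀ ζ ∈ Set.Icc (0:ℝ) 1,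
      HasDerivWithinAt (fun t => Matrix.toEuclideanLin (𝓗 t) (x t)) (u' ζ) (Set.Icc 0 1) ζ) ∧
    (∀ ζ ∈ Set.Icc (0:ℝ) 1,
      s • x ζ = Matrix.toEuclideanLin P₁ (u' ζ)
        + Matrix.toEuclideanLin P₀ (Matrix.toEuclideanLin (𝓗 ζ) (x ζ)))

/-!
Conjugating by `Rᴴ` removes the `s`-dependence from everything but a Hermitian term:
`v := Rᴴ 𝓗 x` solves `v' = s Δ⁻¹ v + C v` with `C = R'ᴴ Sᴴ - Rᴴ P₁⁻¹ P₀ Sᴴ`, because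
`Rᴴ 𝓗 P₁ = Δ Rᴴ` and `Sᴴ Rᴴ = 1`. As `Δ⁻¹` is Hermitian, `⟪v, s Δ⁻¹ v⟫` has real part
`Re s · ⟪v, Δ⁻¹ v⟫`, so `|(‖v‖²)'| ≤ 2 (|Re s| ‖Δ⁻¹‖ + ‖C‖) ‖v‖²` and Grönwall's argument, run
forwards and backwards, bounds `‖v ζ‖` above and below by `e^{±(|Re s| α + β) ζ} ‖v 0‖`. By
compactness of `[0,1]`, `‖Δ⁻¹‖`, `‖C‖`, `‖Rᴴ 𝓗‖` and `‖(Rᴴ 𝓗)⁻¹‖` are bounded uniformly, which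
yields the constants and transfers the bounds from `v` back to `x`; `e^{β ζ} ≤ e^β` is absorbed
into `M`.
-/

section Gronwall

open Real

theorem monotoneOn_exp_mul_mul_of_deriv_add_nonneg {g g' : ℝ → ℝ} {a b c : ℝ}
    (hg : ∀ t ∈ Icc a b, HasDerivWithinAt g (g' t) (Icc a b) t)
    (hc : ∀ t ∈ Icc a b, 0 ≤ g' t + c * g t) :
    MonotoneOn (fun t => exp (c * t) * g t) (Icc a b) := by
  have hderiv : ∀ t ∈ Icc a b, HasDerivWithinAt (fun t => exp (c * t) * g t)
      (exp (c * t) * (g' t + c * g t)) (Icc a b) t := fun t ht => by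
    have := ((hasDerivAt_id t).const_mul c).exp.hasDerivWithinAt.fun_mul (hg t ht)
    simp only [id, mul_one] at this
    exact this.congr_deriv (by ring)
  refine monotoneOn_of_hasDerivWithinAt_nonneg (f' := fun t => exp (c * t) * (g' t + c * g t))
    (convex_Icc a b) (fun t ht => (hderiv t ht).continuousWithinAt) (fun t ht => ?_)
    (fun t ht => ?_)
  · exact (hderiv t (interior_subset ht)).mono interior_subset
  · exact mul_nonneg (exp_pos _).le (hc t (interior_subset ht))

theorem le_exp_mul_of_abs_deriv_le {g g' : ℝ → ℝ} {a b K t : ℝ}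
    (hg : ∀ t ∈ Icc a b, HasDerivWithinAt g (g' t) (Icc a b) t)
    (hK : ∀ t ∈ Icc a b, |g' t| ≤ K * g t) (ht : t ∈ Icc a b) :
    g t ≤ exp (K * (t - a)) * g a ∧ g a ≤ exp (K * (t - a)) * g t := by
  have ha : a ∈ Icc a b := left_mem_Icc.2 (ht.1.trans ht.2)
  -- `t ↦ e^{-Kt} g t` is antitone and `t ↦ e^{Kt} g t` is monotone.
  have hdecay := monotoneOn_exp_mul_mul_of_deriv_add_nonneg (g := fun t => -g t) (c := -K)
    (fun t ht => (hg t ht).neg) (fun t ht => by linarith [le_abs_self (g' t), hK t ht])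
      ha ht ht.1
  have hgrowth := monotoneOn_exp_mul_mul_of_deriv_add_nonneg (c := K) hg
    (fun t ht => by linarith [neg_abs_le (g' t), hK t ht]) ha ht ht.1
  simp only at hdecay hgrowth
  constructor
  · calc g t = exp (K * t) * (exp (-K * t) * g t) := by rw [← mul_assoc, ← exp_add]; simp
      _ ≤ exp (K * t) * (exp (-K * a) * g a) :=
          mul_le_mul_of_nonneg_left (by linarith) (exp_pos _).le
      _ = exp (K * (t - a)) * g a := by rw [← mul_assoc, ← exp_add]; ring_nf
  · calc g a = exp (-(K * a)) * (exp (K * a) * g a) := by rw [← mul_assoc, ← exp_add]; simp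
      _ ≤ exp (-(K * a)) * (exp (K * t) * g t) :=
          mul_le_mul_of_nonneg_left hgrowth (exp_pos _).le
      _ = exp (K * (t - a)) * g t := by rw [← mul_assoc, ← exp_add]; ring_nf

end Gronwall

section NormGrowth

open Real
open scoped InnerProductSpace RealInnerProductSpace

theorem norm_le_exp_mul_of_abs_inner_deriv_le {F : Type*} [NormedAddCommGroup F]
    [InnerProductSpace ℝ F] {v v' : ℝ → F} {a b k t : ℝ}
    (hv : ∀ t ∈ Icc a b, HasDerivWithinAt v (v' t) (Icc a b) t)
    (hk : ∀ t ∈ Icc a b, |⟪v t, v' t⟫| ≤ k * ‖v t‖ ^ 2) (ht : t ∈ Icc a b) :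
    ‖v t‖ ≤ exp (k * (t - a)) * ‖v a‖ ∧ ‖v a‖ ≤ exp (k * (t - a)) * ‖v t‖ := by
  have hsqrt : ∀ {x y : ℝ}, 0 ≤ x → 0 ≤ y → x ^ 2 ≤ exp (2 * k * (t - a)) * y ^ 2 →
      x ≤ exp (k * (t - a)) * y := fun hx hy h => by
    rw [← pow_le_pow_iff_left₀ hx (by positivity) two_ne_zero, mul_pow, ← exp_nat_mul,
      Nat.cast_ofNat, ← mul_assoc]
    exact h
  obtain ⟨hup, hlow⟩ := le_exp_mul_of_abs_deriv_le (g := fun t => ‖v t‖ ^ 2) (K := 2 * k)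
    (fun t ht => (hv t ht).norm_sq) (fun t ht => by rw [abs_mul, abs_two]; linarith [hk t ht]) ht
  exact ⟨hsqrt (norm_nonneg _) (norm_nonneg _) hup, hsqrt (norm_nonneg _) (norm_nonneg _) hlow⟩

theorem abs_re_inner_smul_add_le {E : Type*} [NormedAddCommGroup E] [InnerProductSpace ℂ E]
    [CompleteSpace E] {A : E →L[ℂ] E} (hA : IsSelfAdjoint A) (B : E →L[ℂ] E) (s : ℂ) (v : E) :
    |(⟪v, s • A v + B v⟫_ℂ).re| ≤ (|s.re| * ‖A‖ + ‖B‖) * ‖v‖ ^ 2 := by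
  have hbound : ∀ T : E →L[ℂ] E, |(⟪v, T v⟫_ℂ).re| ≤ ‖T‖ * ‖v‖ ^ 2 := fun T =>
    calc |(⟪v, T v⟫_ℂ).re| ≤ ‖v‖ * ‖T v‖ :=
          (Complex.abs_re_le_norm _).trans (norm_inner_le_norm _ _)
      _ ≤ ‖v‖ * (‖T‖ * ‖v‖) := by gcongr; exact T.le_opNorm v
      _ = ‖T‖ * ‖v‖ ^ 2 := by ring
  have hreal : (⟪v, A v⟫_ℂ).im = 0 := hA.isSymmetric.im_inner_self_apply v
  calc |(⟪v, s • A v + B v⟫_ℂ).re| = |s.re * (⟪v, A v⟫_ℂ).re + (⟪v, B v⟫_ℂ).re| := by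
        simp [hreal]
    _ ≤ |s.re| * |(⟪v, A v⟫_ℂ).re| + |(⟪v, B v⟫_ℂ).re| := by
        rw [← abs_mul]; exact abs_add_le _ _
    _ ≤ |s.re| * (‖A‖ * ‖v‖ ^ 2) + ‖B‖ * ‖v‖ ^ 2 := by gcongr <;> apply hbound
    _ = (|s.re| * ‖A‖ + ‖B‖) * ‖v‖ ^ 2 := by ring

/-- The real inner product of `EuclideanSpace ℂ ι` is the `PiLp` one, which is only
propositionally equal to `re ⟪x, y⟫_ℂ`. -/
theorem EuclideanSpace.real_inner_eq_re_inner {ι : Type*} [Fintype ι]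
    (x y : EuclideanSpace ℂ ι) : ⟪x, y⟫_ℝ = (⟪x, y⟫_ℂ).re := by
  simp [PiLp.inner_apply, Complex.re_sum]

theorem norm_le_exp_mul_of_hasDerivWithinAt_smul_add {ι : Type*} [Fintype ι]
    {v : ℝ → EuclideanSpace ℂ ι} {A B : ℝ → EuclideanSpace ℂ ι →L[ℂ] EuclideanSpace ℂ ι}
    {s : ℂ} {α β a b t : ℝ}
    (hv : ∀ t ∈ Icc a b, HasDerivWithinAt v (s • A t (v t) + B t (v t)) (Icc a b) t)
    (hA : ∀ t ∈ Icc a b, IsSelfAdjoint (A t)) (hα : ∀ t ∈ Icc a b, ‖A t‖ ≤ α)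
    (hβ : ∀ t ∈ Icc a b, ‖B t‖ ≤ β) (ht : t ∈ Icc a b) :
    ‖v t‖ ≤ exp ((|s.re| * α + β) * (t - a)) * ‖v a‖ ∧
      ‖v a‖ ≤ exp ((|s.re| * α + β) * (t - a)) * ‖v t‖ :=
  norm_le_exp_mul_of_abs_inner_deriv_le hv (fun t ht => by
    rw [EuclideanSpace.real_inner_eq_re_inner]
    refine (abs_re_inner_smul_add_le (hA t ht) _ _ _).trans ?_
    gcongr
    exacts [hα t ht, hβ t ht]) ht

end NormGrowth

section MatrixOperators

variable {ι 𝕜 : Type*} [Fintype ι] [DecidableEq ι] [RCLike 𝕜]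

local notation "𝒯" => Matrix.toEuclideanCLM (n := ι) (𝕜 := 𝕜)

theorem toEuclideanCLM_apply_eq_sum (M : Matrix ι ι 𝕜) (w : EuclideanSpace 𝕜 ι) :
    𝒯 M w = ∑ i, ∑ j, M i j • 𝒯 (single i j 1) w := by
  conv_lhs => rw [M.matrix_eq_sum_single]
  simp only [map_sum, _root_.sum_apply, ← _root_.smul_apply, ← map_smul, smul_single, smul_eq_mul,
    mul_one]

theorem hasDerivWithinAt_toEuclideanCLM_apply {A : ℝ → Matrix ι ι 𝕜} {A' : Matrix ι ι 𝕜}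
    {w : ℝ → EuclideanSpace 𝕜 ι} {w' : EuclideanSpace 𝕜 ι} {s : Set ℝ} {t : ℝ}
    (hA : ∀ i j, HasDerivWithinAt (fun t => A t i j) (A' i j) s t)
    (hw : HasDerivWithinAt w w' s t) :
    HasDerivWithinAt (fun t => 𝒯 (A t) (w t)) (𝒯 A' (w t) + 𝒯 (A t) w') s t := by
  have hsum := HasDerivWithinAt.fun_sum (u := Finset.univ) fun i _ =>
    HasDerivWithinAt.fun_sum (u := Finset.univ) fun j _ => (hA i j).smul
      (((𝒯 (single i j 1)).restrictScalars ℝ).hasFDerivAt.comp_hasDerivWithinAt t hw)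
  simp only [Pi.smul_apply', Function.comp_apply, ContinuousLinearMap.coe_restrictScalars',
    Finset.sum_add_distrib, ← toEuclideanCLM_apply_eq_sum] at hsum
  rwa [add_comm] at hsum

theorem isSelfAdjoint_toEuclideanCLM {A : Matrix ι ι 𝕜} (hA : A.IsHermitian) :
    IsSelfAdjoint (𝒯 A) :=
  hA.isSelfAdjoint.map _

theorem continuousOn_matrix {X m n R : Type*} [TopologicalSpace X] [TopologicalSpace R]
    {A : X → Matrix m n R} {s : Set X} (hA : ∀ i j, ContinuousOn (fun x => A x i j) s) :
    ContinuousOn A s :=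
  continuousOn_pi.2 fun i => continuousOn_pi.2 (hA i)

theorem ContinuousOn.toEuclideanCLM {X : Type*} [TopologicalSpace X] {A : X → Matrix ι ι 𝕜}
    {s : Set X} (hA : ContinuousOn A s) :
    ContinuousOn (fun x => Matrix.toEuclideanCLM (n := ι) (𝕜 := 𝕜) (A x)) s :=
  (LinearMap.continuous_of_finiteDimensional
    (Matrix.toEuclideanCLM (n := ι) (𝕜 := 𝕜)).toAlgEquiv.toLinearMap).comp_continuousOn hA

theorem ContinuousOn.matrix_inv {X K : Type*} [TopologicalSpace X] [Field K] [TopologicalSpace K]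
    [IsTopologicalRing K] [ContinuousInv₀ K] {A : X → Matrix ι ι K} {s : Set X}
    (hA : ContinuousOn A s) (hunit : ∀ x ∈ s, IsUnit (A x)) :
    ContinuousOn (fun x => (A x)⁻¹) s := fun x hx =>
  (continuousAt_matrix_inv _ (by
    rw [Ring.inverse_eq_inv']
    exact continuousAt_inv₀ ((isUnit_iff_isUnit_det _).1 (hunit x hx)).ne_zero)
    ).comp_continuousWithinAt (hA x hx)

theorem IsCompact.exists_pos_norm_toEuclideanCLM_le {X : Type*} [TopologicalSpace X]
    {A : X → Matrix ι ι 𝕜} {K : Set X} (hK : IsCompact K) (hA : ContinuousOn A K) :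
    ∃ C, 0 < C ∧ ∀ x ∈ K, ‖𝒯 (A x)‖ ≤ C := by
  obtain ⟨C, hC⟩ := hK.exists_bound_of_continuousOn hA.toEuclideanCLM
  exact ⟨max C 1, by positivity, fun x hx => (hC x hx).trans (le_max_left _ _)⟩

theorem IsCompact.exists_norm_toEuclideanCLM_apply_equiv {X : Type*} [TopologicalSpace X]
    {A : X → Matrix ι ι 𝕜} {K : Set X} (hK : IsCompact K) (hA : ContinuousOn A K)
    (hunit : ∀ x ∈ K, IsUnit (A x)) :
    ∃ c, 0 < c ∧ ∀ x ∈ K, ∀ w, ‖w‖ ≤ c * ‖𝒯 (A x) w‖ ∧ ‖𝒯 (A x) w‖ ≤ c * ‖w‖ := by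
  obtain ⟨c₁, hc₁, h₁⟩ := hK.exists_pos_norm_toEuclideanCLM_le hA
  obtain ⟨c₂, -, h₂⟩ := hK.exists_pos_norm_toEuclideanCLM_le (hA.matrix_inv hunit)
  refine ⟨max c₁ c₂, lt_max_of_lt_left hc₁, fun x hx w => ⟨?_, ?_⟩⟩
  · have hinv : (A x)⁻¹ * A x = 1 := nonsing_inv_mul _ ((isUnit_iff_isUnit_det _).1 (hunit x hx))
    calc ‖w‖ = ‖𝒯 (A x)⁻¹ (𝒯 (A x) w)‖ := by
          rw [← mul_apply_eq_comp, ← map_mul, hinv, map_one, one_apply_eq_self]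
      _ ≤ ‖𝒯 (A x)⁻¹‖ * ‖𝒯 (A x) w‖ := ContinuousLinearMap.le_opNorm _ _
      _ ≤ max c₁ c₂ * ‖𝒯 (A x) w‖ := by
          gcongr; exact (h₂ x hx).trans (le_max_right _ _)
  · exact (ContinuousLinearMap.le_opNorm _ _).trans
      (by gcongr; exact (h₁ x hx).trans (le_max_left _ _))

end MatrixOperators

local notation "𝒯" => Matrix.toEuclideanCLM (n := _) (𝕜 := ℂ)

theorem exists_norm_le_exp_mul_of_hasDerivWithinAt_smul_add {ι : Type*} [Fintype ι]
    [DecidableEq ι] {A B : ℝ → Matrix ι ι ℂ} {a b : ℝ} (hA : ContinuousOn A (Icc a b))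
    (hAh : ∀ t ∈ Icc a b, (A t).IsHermitian) (hB : ContinuousOn B (Icc a b)) :
    ∃ α β, 0 < α ∧ 0 < β ∧ ∀ (s : ℂ) (v : ℝ → EuclideanSpace ℂ ι),
      (∀ t ∈ Icc a b, HasDerivWithinAt v (s • 𝒯 (A t) (v t) + 𝒯 (B t) (v t)) (Icc a b) t) →
      ∀ t ∈ Icc a b, ‖v t‖ ≤ Real.exp ((|s.re| * α + β) * (t - a)) * ‖v a‖ ∧
        ‖v a‖ ≤ Real.exp ((|s.re| * α + β) * (t - a)) * ‖v t‖ := by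
  obtain ⟨α, hα, hAα⟩ := isCompact_Icc.exists_pos_norm_toEuclideanCLM_le hA
  obtain ⟨β, hβ, hBβ⟩ := isCompact_Icc.exists_pos_norm_toEuclideanCLM_le hB
  exact ⟨α, β, hα, hβ, fun s v hv t ht => norm_le_exp_mul_of_hasDerivWithinAt_smul_add hv
    (fun t ht => isSelfAdjoint_toEuclideanCLM (hAh t ht)) hAα hBβ ht⟩

theorem Matrix.IsDiag.isHermitian_of_im_eq_zero {n : Type*} {A : Matrix n n ℂ} (hA : A.IsDiag)
    (him : ∀ i, (A i i).im = 0) : A.IsHermitian := by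
  refine IsHermitian.ext fun i j => ?_
  rcases eq_or_ne i j with rfl | hij
  · exact Complex.conj_eq_iff_im.2 (him i)
  · simp [hA hij, hA hij.symm]

theorem conjTranspose_mul_mul_eq_mul_conjTranspose {n α : Type*} [Fintype n] [DecidableEq n]
    [CommSemiring α] [StarRing α] {P H R S Δ : Matrix n n α} (hP : P.IsHermitian)
    (hH : H.IsHermitian) (hΔ : Δ.IsHermitian) (hSR : S * R = 1) (hfact : P * H = R * Δ * S) :
    Rᴴ * H * P = Δ * Rᴴ := by
  have hHP : H * P = Sᴴ * Δ * Rᴴ := by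
    simpa [conjTranspose_mul, hP.eq, hH.eq, hΔ.eq, Matrix.mul_assoc] using
      congrArg conjTranspose hfact
  rw [Matrix.mul_assoc, hHP, ← Matrix.mul_assoc, ← Matrix.mul_assoc, ← conjTranspose_mul, hSR,
    conjTranspose_one, Matrix.one_mul]

theorem IsClassicalSolution.hasDerivWithinAt_conjTranspose_mul {d : ℕ}
    {P₁ P₀ : Matrix (Fin d) (Fin d) ℂ} {𝓗 R : ℝ → Matrix (Fin d) (Fin d) ℂ} {s : ℂ}
    {x : ℝ → EuclideanSpace ℂ (Fin d)} (hx : IsClassicalSolution P₁ P₀ 𝓗 s x) (hP₁ : IsUnit P₁)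
    {S Δ R' : Matrix (Fin d) (Fin d) ℂ} {ζ : ℝ} (hζ : ζ ∈ Icc (0 : ℝ) 1)
    (hR' : ∀ i j, HasDerivWithinAt (fun t => R t i j) (R' i j) (Icc 0 1) ζ)
    (hRS : R ζ * S = 1) (hΔ : IsUnit Δ) (hRHP : (R ζ)ᴴ * 𝓗 ζ * P₁ = Δ * (R ζ)ᴴ) :
    HasDerivWithinAt (fun t => 𝒯 ((R t)ᴴ * 𝓗 t) (x t))
      (s • 𝒯 Δ⁻¹ (𝒯 ((R ζ)ᴴ * 𝓗 ζ) (x ζ))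
        + 𝒯 (R'ᴴ * Sᴴ - (R ζ)ᴴ * P₁⁻¹ * P₀ * Sᴴ) (𝒯 ((R ζ)ᴴ * 𝓗 ζ) (x ζ))) (Icc 0 1) ζ := by
  obtain ⟨u', -, hu', heq⟩ := hx
  have hP₁inv : P₁⁻¹ * P₁ = 1 := nonsing_inv_mul _ ((isUnit_iff_isUnit_det _).1 hP₁)
  have hΔinv : Δ⁻¹ * Δ = 1 := nonsing_inv_mul _ ((isUnit_iff_isUnit_det _).1 hΔ)
  have hSR : Sᴴ * (R ζ)ᴴ = 1 := by rw [← conjTranspose_mul, hRS, conjTranspose_one]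
  have hdiag : Δ⁻¹ * ((R ζ)ᴴ * 𝓗 ζ) = (R ζ)ᴴ * P₁⁻¹ :=
    calc Δ⁻¹ * ((R ζ)ᴴ * 𝓗 ζ) = Δ⁻¹ * ((R ζ)ᴴ * 𝓗 ζ * P₁ * P₁⁻¹) := by
          rw [Matrix.mul_assoc _ P₁, mul_nonsing_inv _ ((isUnit_iff_isUnit_det _).1 hP₁),
            Matrix.mul_one]
      _ = (R ζ)ᴴ * P₁⁻¹ := by
          rw [hRHP, ← Matrix.mul_assoc, ← Matrix.mul_assoc, hΔinv, Matrix.one_mul]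
  have hrest : (R'ᴴ * Sᴴ - (R ζ)ᴴ * P₁⁻¹ * P₀ * Sᴴ) * ((R ζ)ᴴ * 𝓗 ζ) =
      R'ᴴ * 𝓗 ζ - (R ζ)ᴴ * P₁⁻¹ * P₀ * 𝓗 ζ := by
    simp only [sub_mul, Matrix.mul_assoc]
    rw [← Matrix.mul_assoc Sᴴ, hSR, Matrix.one_mul]
  have hu'ζ : u' ζ = 𝒯 P₁⁻¹ (s • x ζ - 𝒯 P₀ (𝒯 (𝓗 ζ) (x ζ))) := by
    have heqζ : s • x ζ = 𝒯 P₁ (u' ζ) + 𝒯 P₀ (𝒯 (𝓗 ζ) (x ζ)) := heq ζ hζ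
    rw [heqζ, add_sub_cancel_right, ← mul_apply_eq_comp, ← map_mul, hP₁inv, map_one,
      one_apply_eq_self]
  have hu : HasDerivWithinAt (fun t => 𝒯 (𝓗 t) (x t)) (u' ζ) (Icc 0 1) ζ := hu' ζ hζ
  have hRstar : ∀ i j, HasDerivWithinAt (fun t => (R t)ᴴ i j) (R'ᴴ i j) (Icc 0 1) ζ :=
    fun i j => by simpa using (hR' j i).star
  convert hasDerivWithinAt_toEuclideanCLM_apply hRstar hu using 1
  · simp only [map_mul, mul_apply_eq_comp]
  · rw [hu'ζ, ← mul_apply_eq_comp (𝒯 Δ⁻¹), ← map_mul, hdiag, ← mul_apply_eq_comp (𝒯 (_ - _)),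
      ← map_mul, hrest]
    simp only [map_sub, map_smul, map_mul, _root_.sub_apply, mul_apply_eq_comp]
    abel

theorem exists_growth_bounds_conjTranspose_mul {d : ℕ} {P₁ P₀ : Matrix (Fin d) (Fin d) ℂ}
    {𝓗 S R Δ : ℝ → Matrix (Fin d) (Fin d) ℂ} (hP₁herm : P₁.IsHermitian) (hP₁inv : IsUnit P₁)
    (h𝓗herm : ∀ ζ ∈ Icc (0 : ℝ) 1, (𝓗 ζ).IsHermitian) (hS : ContinuousOn S (Icc 0 1))
    (hR : ∀ i j, ContDiffOn ℝ 1 (fun ζ => R ζ i j) (Icc 0 1)) (hΔ : ContinuousOn Δ (Icc 0 1))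
    (hRS : ∀ ζ ∈ Icc (0 : ℝ) 1, R ζ * S ζ = 1 ∧ S ζ * R ζ = 1)
    (hΔherm : ∀ ζ ∈ Icc (0 : ℝ) 1, (Δ ζ).IsHermitian)
    (hΔinv : ∀ ζ ∈ Icc (0 : ℝ) 1, IsUnit (Δ ζ))
    (hfact : ∀ ζ ∈ Icc (0 : ℝ) 1, P₁ * 𝓗 ζ = R ζ * Δ ζ * S ζ) :
    ∃ α β, 0 < α ∧ 0 < β ∧ ∀ (s : ℂ) (x : ℝ → EuclideanSpace ℂ (Fin d)),
      IsClassicalSolution P₁ P₀ 𝓗 s x → ∀ ζ ∈ Icc (0 : ℝ) 1,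
        ‖𝒯 ((R ζ)ᴴ * 𝓗 ζ) (x ζ)‖ ≤
            Real.exp ((|s.re| * α + β) * ζ) * ‖𝒯 ((R 0)ᴴ * 𝓗 0) (x 0)‖ ∧
          ‖𝒯 ((R 0)ᴴ * 𝓗 0) (x 0)‖ ≤
            Real.exp ((|s.re| * α + β) * ζ) * ‖𝒯 ((R ζ)ᴴ * 𝓗 ζ) (x ζ)‖ := by
  let R' : ℝ → Matrix (Fin d) (Fin d) ℂ :=
    fun ζ => of fun i j => derivWithin (fun t => R t i j) (Icc 0 1) ζ
  have hR'cont : ContinuousOn R' (Icc 0 1) := continuousOn_matrix fun i j =>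
    (hR i j).continuousOn_derivWithin uniqueDiffOn_Icc_zero_one le_rfl
  have hRcont : ContinuousOn R (Icc 0 1) := continuousOn_matrix fun i j => (hR i j).continuousOn
  obtain ⟨α, β, hα, hβ, hgrowth⟩ := exists_norm_le_exp_mul_of_hasDerivWithinAt_smul_add
    (A := fun ζ => (Δ ζ)⁻¹) (B := fun ζ => (R' ζ)ᴴ * (S ζ)ᴴ - (R ζ)ᴴ * P₁⁻¹ * P₀ * (S ζ)ᴴ)
    (hΔ.matrix_inv hΔinv) (fun ζ hζ => (hΔherm ζ hζ).inv)
    ((hR'cont.star.mul hS.star).sub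
      (((hRcont.star.mul continuousOn_const).mul continuousOn_const).mul hS.star))
  refine ⟨α, β, hα, hβ, fun s x hx ζ hζ => ?_⟩
  simpa only [sub_zero] using hgrowth s (fun t => 𝒯 ((R t)ᴴ * 𝓗 t) (x t)) (fun t ht =>
    hx.hasDerivWithinAt_conjTranspose_mul hP₁inv ht
      (fun i j => ((hR i j).differentiableOn one_ne_zero t ht).hasDerivWithinAt) (hRS t ht).1
      (hΔinv t ht) (conjTranspose_mul_mul_eq_mul_conjTranspose hP₁herm (h𝓗herm t ht)
        (hΔherm t ht) (hRS t ht).2 (hfact t ht))) ζ hζ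

theorem le_sq_mul_exp_mul_exp_mul {X₀ X₁ V₀ V₁ c r β ζ : ℝ} (hc : 0 ≤ c) (hβ : 0 ≤ β)
    (hX₀ : 0 ≤ X₀) (hζ : ζ ≤ 1) (hX₁ : X₁ ≤ c * V₁) (hV : V₁ ≤ Real.exp ((r + β) * ζ) * V₀)
    (hV₀ : V₀ ≤ c * X₀) : X₁ ≤ c ^ 2 * Real.exp β * Real.exp (r * ζ) * X₀ :=
  calc X₁ ≤ c * (Real.exp ((r + β) * ζ) * (c * X₀)) := by
        refine hX₁.trans (mul_le_mul_of_nonneg_left (hV.trans ?_) hc)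
        exact mul_le_mul_of_nonneg_left hV₀ (Real.exp_pos _).le
    _ ≤ c * (Real.exp (β + r * ζ) * (c * X₀)) := by
        gcongr
        nlinarith
    _ = c ^ 2 * Real.exp β * Real.exp (r * ζ) * X₀ := by rw [Real.exp_add]; ring

theorem solution_growth_bounds_general
    (d : ℕ)
    (P₁ P₀ : Matrix (Fin d) (Fin d) ℂ)
    (hP₁herm : P₁.IsHermitian) (hP₁inv : IsUnit P₁)
    (𝓗 : ℝ → Matrix (Fin d) (Fin d) ℂ)
    (h𝓗cont : ContinuousOn 𝓗 (Set.Icc 0 1))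
    (h𝓗pos : ∀ ζ ∈ Set.Icc (0:ℝ) 1, (𝓗 ζ).PosDef)
    (S R Δ : ℝ → Matrix (Fin d) (Fin d) ℂ)
    (hS : ∀ i j, ContDiffOn ℝ 1 (fun ζ => S ζ i j) (Set.Icc 0 1))
    (hR : ∀ i j, ContDiffOn ℝ 1 (fun ζ => R ζ i j) (Set.Icc 0 1))
    (hΔ : ∀ i j, ContDiffOn ℝ 1 (fun ζ => Δ ζ i j) (Set.Icc 0 1))
    (hRS : ∀ ζ ∈ Set.Icc (0:ℝ) 1, R ζ * S ζ = 1 ∧ S ζ * R ζ = 1)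
    (hΔdiag : ∀ ζ ∈ Set.Icc (0:ℝ) 1, (Δ ζ).IsDiag)
    (hΔreal : ∀ ζ ∈ Set.Icc (0:ℝ) 1, ∀ i, (Δ ζ i i).im = 0)
    (hΔinv : ∀ ζ ∈ Set.Icc (0:ℝ) 1, IsUnit (Δ ζ))
    (hfact : ∀ ζ ∈ Set.Icc (0:ℝ) 1, P₁ * 𝓗 ζ = R ζ * Δ ζ * S ζ) :
    ∃ M M' c₀ c₀' : ℝ, 0 < M ∧ 0 < M' ∧ 0 ≤ c₀ ∧ 0 ≤ c₀' ∧
      ∀ s : ℂ, ∀ x : ℝ → EuclideanSpace ℂ (Fin d),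
        IsClassicalSolution P₁ P₀ 𝓗 s x →
        ∀ ζ ∈ Set.Icc (0:ℝ) 1,
          M' * Real.exp (-(|s.re| * c₀' * ζ)) * ‖x 0‖ ≤ ‖x ζ‖ ∧
          ‖x ζ‖ ≤ M * Real.exp (|s.re| * c₀ * ζ) * ‖x 0‖ := by
  have hΔherm : ∀ ζ ∈ Icc (0 : ℝ) 1, (Δ ζ).IsHermitian :=
    fun ζ hζ => (hΔdiag ζ hζ).isHermitian_of_im_eq_zero (hΔreal ζ hζ)
  have hRcont : ContinuousOn R (Icc 0 1) := continuousOn_matrix fun i j => (hR i j).continuousOn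
  obtain ⟨α, β, hα, hβ, hgrowth⟩ := exists_growth_bounds_conjTranspose_mul (P₀ := P₀) hP₁herm
    hP₁inv (fun ζ hζ => (h𝓗pos ζ hζ).isHermitian)
    (continuousOn_matrix fun i j => (hS i j).continuousOn) hR
    (continuousOn_matrix fun i j => (hΔ i j).continuousOn) hRS hΔherm hΔinv hfact
  obtain ⟨c, hc, hequiv⟩ := isCompact_Icc.exists_norm_toEuclideanCLM_apply_equiv
    (A := fun ζ => (R ζ)ᴴ * 𝓗 ζ) (hRcont.star.mul h𝓗cont)
    fun ζ hζ => (IsUnit.of_mul_eq_one _ (hRS ζ hζ).1).star.mul (h𝓗pos ζ hζ).isUnit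
  refine ⟨c ^ 2 * Real.exp β, (c ^ 2 * Real.exp β)⁻¹, α, α, by positivity, by positivity, hα.le,
    hα.le, fun s x hx ζ hζ => ?_⟩
  have h0 : (0 : ℝ) ∈ Icc (0 : ℝ) 1 := left_mem_Icc.2 zero_le_one
  obtain ⟨hup, hlow⟩ := hgrowth s x hx ζ hζ
  have hlower := le_sq_mul_exp_mul_exp_mul hc.le hβ.le (norm_nonneg _) hζ.2
    (hequiv 0 h0 (x 0)).1 hlow (hequiv ζ hζ (x ζ)).2
  refine ⟨?_, le_sq_mul_exp_mul_exp_mul hc.le hβ.le (norm_nonneg _) hζ.2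
    (hequiv ζ hζ (x ζ)).1 hup (hequiv 0 h0 (x 0)).2⟩
  rw [Real.exp_neg, ← mul_inv, inv_mul_le_iff₀ (by positivity)]
  exact hlower

/-- **Lemma 5.1.** Under the standing port-Hamiltonian assumptions, there are
constants `M, M̃ > 0` and `c₀, c̃₀ ≥ 0`, independent of `s`, such that every classical solution
of the eigenvalue ODE satisfies
`M̃·e^{-|Re s|·c̃₀·ζ}·‖x 0‖ ≤ ‖x ζ‖ ≤ M·e^{|Re s|·c₀·ζ}·‖x 0‖` on `[0,1]`. -/
theorem solution_growth_bounds
    (d : ℕ) (hd : 1 ≤ d)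
    (P₁ P₀ : Matrix (Fin d) (Fin d) ℂ)
    (hP₁herm : P₁.IsHermitian) (hP₁inv : IsUnit P₁)
    (hP₀skew : P₀ᴴ = -P₀)
    (𝓗 : ℝ → Matrix (Fin d) (Fin d) ℂ)
    (h𝓗cont : ContinuousOn 𝓗 (Set.Icc 0 1))
    (h𝓗pos : ∀ ζ ∈ Set.Icc (0:ℝ) 1, (𝓗 ζ).PosDef)
    (S R Δ : ℝ → Matrix (Fin d) (Fin d) ℂ)
    (hS : ∀ i j, ContDiffOn ℝ 1 (fun ζ => S ζ i j) (Set.Icc 0 1))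
    (hR : ∀ i j, ContDiffOn ℝ 1 (fun ζ => R ζ i j) (Set.Icc 0 1))
    (hΔ : ∀ i j, ContDiffOn ℝ 1 (fun ζ => Δ ζ i j) (Set.Icc 0 1))
    (hRS : ∀ ζ ∈ Set.Icc (0:ℝ) 1, R ζ * S ζ = 1 ∧ S ζ * R ζ = 1)
    (hΔdiag : ∀ ζ ∈ Set.Icc (0:ℝ) 1, (Δ ζ).IsDiag)
    (hΔreal : ∀ ζ ∈ Set.Icc (0:ℝ) 1, ∀ i, (Δ ζ i i).im = 0)
    (hΔinv : ∀ ζ ∈ Set.Icc (0:ℝ) 1, IsUnit (Δ ζ))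
    (hfact : ∀ ζ ∈ Set.Icc (0:ℝ) 1, P₁ * 𝓗 ζ = R ζ * Δ ζ * S ζ) :
    ∃ M M' c₀ c₀' : ℝ, 0 < M ∧ 0 < M' ∧ 0 ≤ c₀ ∧ 0 ≤ c₀' ∧
      ∀ s : ℂ, ∀ x : ℝ → EuclideanSpace ℂ (Fin d),
        IsClassicalSolution P₁ P₀ 𝓗 s x →
        ∀ ζ ∈ Set.Icc (0:ℝ) 1,
          M' * Real.exp (-(|s.re| * c₀' * ζ)) * ‖x 0‖ ≤ ‖x ζ‖ ∧
          ‖x ζ‖ ≤ M * Real.exp (|s.re| * c₀ * ζ) * ‖x 0‖ :=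
  solution_growth_bounds_general d P₁ P₀ hP₁herm hP₁inv 𝓗 h𝓗cont h𝓗pos S R Δ hS hR hΔ hRS hΔdiag
    hΔreal hΔinv hfact
end

section
/- Let Λ : [0,1] → ℂ^{d×d} be continuous with Λ(ζ) diagonal with positive real diagonal entries for every ζ ∈ [0,1], and for real s < 0 set F_s(ζ) := s·∫₀^ζ Λ(τ)⁻¹ dτ (a diagonal matrix with negative real entries for ζ > 0). Let s < 0 and v ∈ ℂ^d. Then I − exp(2F_s(1)) is invertible, and, setting g₀ := exp(F_s(1))·(I − exp(2F_s(1)))⁻¹·v, g(ζ) := 2s·exp(F_s(1) − F_s(ζ))·g₀, and x(ζ) := exp(F_s(ζ) − F_s(1))·g₀ − (2s)⁻¹·g(ζ), the map x : [0,1] → ℂ^d is continuously differentiable and satisfies Λ(ζ)·x'(ζ) = s·x(ζ) + g(ζ) for all ζ ∈ [0,1], x(0) = v, and x(1) = 0. (Explicit solution of the resolvent equation in the proof of Lemma 5.5.) -/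
/-!
Since `Λ(τ) = diag(λᵢ(τ))` with `λᵢ > 0`, the exponent is `F_s(ζ) = diag(ψᵢ(ζ))` with
`ψᵢ(ζ) = s ∫₀^ζ λᵢ⁻¹` real and `ψᵢ(1) < 0`, so `exp(2 F_s(1))` has diagonal entries of modulus
`< 1` and `I − exp(2 F_s(1))` is invertible. As `(2s)⁻¹ g(ζ) = exp(F_s(1) − F_s(ζ)) g₀`,
`x(ζ) = (exp(F_s(ζ) − F_s(1)) − exp(F_s(1) − F_s(ζ))) g₀`; differentiating the diagonal
exponentials gives `x' = s Λ⁻¹ (exp(F_s(ζ) − F_s(1)) + exp(F_s(1) − F_s(ζ))) g₀`, which is the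
equation. The boundary values only use that `F_s(0) = 0` and that `±F_s(1)` commute.
-/

open Matrix Set

namespace Matrix
variable {n : Type*} [Fintype n] [DecidableEq n]

theorem toEuclideanLin_diagonal_apply (w : n → ℂ) (u : EuclideanSpace ℂ n) (i : n) :
    toEuclideanLin (diagonal w) u i = w i * u i := by
  simp [toLpLin_apply, mulVec_diagonal]

theorem exp_diagonal_eq (w : n → ℂ) :
    NormedSpace.exp (diagonal w) = diagonal fun i => Complex.exp (w i) := by
  rw [exp_diagonal, Pi.exp_def]; simp only [Complex.exp_eq_exp_ℂ]

theorem isUnit_one_sub_exp_diagonal {w : n → ℂ} (hw : ∀ i, (w i).re ≠ 0) :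
    IsUnit (1 - NormedSpace.exp (diagonal w)) := by
  rw [exp_diagonal_eq, ← diagonal_one, diagonal_sub, isUnit_diagonal, Pi.isUnit_iff]
  refine fun i => (sub_ne_zero.2 fun h => hw i ?_).isUnit
  simpa [Complex.norm_exp] using (congrArg norm h).symm

theorem toEuclideanLin_exp_neg_sub_exp_apply {A : Matrix n n ℂ}
    (h : IsUnit (1 - NormedSpace.exp ((2 : ℂ) • A))) (v : EuclideanSpace ℂ n) :
    toEuclideanLin (NormedSpace.exp (-A))
        (toEuclideanLin (NormedSpace.exp A * (1 - NormedSpace.exp ((2 : ℂ) • A))⁻¹) v) -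
      toEuclideanLin (NormedSpace.exp A)
        (toEuclideanLin (NormedSpace.exp A * (1 - NormedSpace.exp ((2 : ℂ) • A))⁻¹) v) = v := by
  have hneg : NormedSpace.exp (-A) * NormedSpace.exp A = 1 := by
    rw [← exp_add_of_commute _ _ (Commute.neg_left (Commute.refl A)), neg_add_cancel,
      NormedSpace.exp_zero]
  have htwo : NormedSpace.exp A * NormedSpace.exp A = NormedSpace.exp ((2 : ℂ) • A) := by
    rw [← exp_add_of_commute _ _ (Commute.refl A), two_smul]
  rw [← LinearMap.sub_apply, ← map_sub, ← LinearMap.comp_apply, ← toLpLin_mul_same, ← mul_assoc,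
    sub_mul, hneg, htwo, mul_nonsing_inv _ ((isUnit_iff_isUnit_det _).1 h), toLpLin_one,
    LinearMap.id_apply]

theorem _root_.Continuous.toEuclideanLin_apply {M : ℝ → Matrix n n ℂ} (hM : Continuous M)
    (u : EuclideanSpace ℂ n) : Continuous fun t => toEuclideanLin (M t) u :=
  (PiLp.continuous_toLp 2 _).comp (hM.matrix_mulVec continuous_const)

theorem _root_.Continuous.exp_diagonal {φ : ℝ → n → ℂ} (hφ : Continuous φ) :
    Continuous fun t => NormedSpace.exp (diagonal (φ t)) := by
  simp only [exp_diagonal_eq]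
  exact Continuous.matrix_diagonal (continuous_pi fun i =>
    Complex.continuous_exp.comp ((continuous_apply i).comp hφ))

theorem continuous_toEuclideanLin_diagonal_mul_exp_add_exp {r φ : ℝ → n → ℂ} (hr : Continuous r)
    (hφ : Continuous φ) (c : n → ℂ) (u : EuclideanSpace ℂ n) :
    Continuous fun t => toEuclideanLin (diagonal (r t) *
      (NormedSpace.exp (diagonal (φ t) - diagonal c) +
        NormedSpace.exp (diagonal c - diagonal (φ t)))) u := by
  simp only [diagonal_sub]
  exact (hr.matrix_diagonal.mul ((hφ.sub continuous_const).exp_diagonal.add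
    (continuous_const.sub hφ).exp_diagonal)).toEuclideanLin_apply u

theorem hasDerivAt_toEuclideanLin_exp_diagonal {φ : ℝ → n → ℂ} {φ' : n → ℂ} {ζ : ℝ}
    (hφ : HasDerivAt φ φ' ζ) (u : EuclideanSpace ℂ n) :
    HasDerivAt (fun t => toEuclideanLin (NormedSpace.exp (diagonal (φ t))) u)
      (toEuclideanLin (diagonal φ' * NormedSpace.exp (diagonal (φ ζ))) u) ζ := by
  have hcomp : HasDerivAt (fun t i => Complex.exp (φ t i) * u i)
      (fun i => φ' i * Complex.exp (φ ζ i) * u i) ζ :=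
    hasDerivAt_pi.2 fun i => ((hasDerivAt_pi.1 hφ i).cexp.mul_const (u i)).congr_deriv (by ring)
  have hf : (fun t => toEuclideanLin (NormedSpace.exp (diagonal (φ t))) u) =
      WithLp.toLp 2 ∘ fun t i => Complex.exp (φ t i) * u i := by
    ext t i
    simp [exp_diagonal_eq, toEuclideanLin_diagonal_apply]
  rw [hf]
  refine ((PiLp.hasFDerivAt_toLp (𝕜 := ℝ) 2 _).comp_hasDerivAt ζ hcomp).congr_deriv ?_
  ext i
  simp [exp_diagonal_eq, mulVec_diagonal, mul_assoc]

theorem hasDerivAt_toEuclideanLin_exp_sub_exp {φ : ℝ → n → ℂ} {φ' : n → ℂ} {ζ : ℝ}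
    (hφ : HasDerivAt φ φ' ζ) (c : n → ℂ) (u : EuclideanSpace ℂ n) :
    HasDerivAt (fun t => toEuclideanLin (NormedSpace.exp (diagonal (φ t) - diagonal c)) u -
        toEuclideanLin (NormedSpace.exp (diagonal c - diagonal (φ t))) u)
      (toEuclideanLin (diagonal φ' * (NormedSpace.exp (diagonal (φ ζ) - diagonal c) +
        NormedSpace.exp (diagonal c - diagonal (φ ζ)))) u) ζ := by
  simp only [diagonal_sub]
  refine ((hasDerivAt_toEuclideanLin_exp_diagonal (hφ.sub_const c) u).sub
    (hasDerivAt_toEuclideanLin_exp_diagonal (hφ.const_sub c) u)).congr_deriv ?_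
  rw [show diagonal (-φ') = -diagonal φ' from (diagonal_neg φ').symm, neg_mul, map_neg,
    LinearMap.neg_apply, sub_neg_eq_add, mul_add, map_add, LinearMap.add_apply]
  rfl

end Matrix

section DiagonalCoefficient

variable {n : Type*} {Λ : ℝ → Matrix n n ℂ}

/-- The diagonal entries of `Λ`, extended constantly outside `[0, 1]` so that the fundamental
theorem of calculus applies on all of `ℝ`. -/
noncomputable def extendedDiag (Λ : ℝ → Matrix n n ℂ) (i : n) (τ : ℝ) : ℝ :=
  (Λ (projIcc 0 1 zero_le_one τ) i i).re

/-- The diagonal of `F_s(ζ) = s ∫₀^ζ Λ(τ)⁻¹ dτ`. -/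
noncomputable def resolventExponent (s : ℝ) (Λ : ℝ → Matrix n n ℂ) (ζ : ℝ) (i : n) : ℂ :=
  ((s * ∫ τ in (0 : ℝ)..ζ, (extendedDiag Λ i τ)⁻¹ : ℝ) : ℂ)

noncomputable def resolventRate (s : ℝ) (Λ : ℝ → Matrix n n ℂ) (ζ : ℝ) (i : n) : ℂ :=
  ((s * (extendedDiag Λ i ζ)⁻¹ : ℝ) : ℂ)

theorem extendedDiag_of_mem {τ : ℝ} (hτ : τ ∈ Icc (0 : ℝ) 1) (i : n) :
    extendedDiag Λ i τ = (Λ τ i i).re := by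
  simp [extendedDiag, projIcc_of_mem _ hτ]

theorem extendedDiag_pos (hΛpos : ∀ ζ ∈ Icc (0 : ℝ) 1, ∀ i, 0 < (Λ ζ i i).re) (i : n) (τ : ℝ) :
    0 < extendedDiag Λ i τ :=
  hΛpos _ (projIcc 0 1 zero_le_one τ).2 i

theorem continuous_extendedDiag (hΛcont : ContinuousOn Λ (Icc 0 1)) (i : n) :
    Continuous (extendedDiag Λ i) :=
  Complex.continuous_re.comp (((hΛcont.comp_continuous (continuous_subtype_val.comp
    continuous_projIcc) fun τ => (projIcc 0 1 zero_le_one τ).2)).matrix_elem i i)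

theorem continuous_inv_extendedDiag (hΛcont : ContinuousOn Λ (Icc 0 1))
    (hΛpos : ∀ ζ ∈ Icc (0 : ℝ) 1, ∀ i, 0 < (Λ ζ i i).re) (i : n) :
    Continuous fun τ => (extendedDiag Λ i τ)⁻¹ :=
  (continuous_extendedDiag hΛcont i).inv₀ fun τ => (extendedDiag_pos hΛpos i τ).ne'

theorem continuous_resolventRate (s : ℝ) (hΛcont : ContinuousOn Λ (Icc 0 1))
    (hΛpos : ∀ ζ ∈ Icc (0 : ℝ) 1, ∀ i, 0 < (Λ ζ i i).re) :
    Continuous (resolventRate s Λ) :=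
  continuous_pi fun i => Complex.continuous_ofReal.comp
    (continuous_const.mul (continuous_inv_extendedDiag hΛcont hΛpos i))

theorem eq_diagonal_extendedDiag [DecidableEq n] (hΛdiag : ∀ ζ ∈ Icc (0 : ℝ) 1, (Λ ζ).IsDiag)
    (hΛreal : ∀ ζ ∈ Icc (0 : ℝ) 1, ∀ i, (Λ ζ i i).im = 0) {τ : ℝ} (hτ : τ ∈ Icc (0 : ℝ) 1) :
    Λ τ = diagonal fun i => (extendedDiag Λ i τ : ℂ) := by
  conv_lhs => rw [← (hΛdiag τ hτ).diagonal_diag]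
  congr 1
  ext i
  exact Complex.ext (by simp [extendedDiag_of_mem hτ]) (by simp [hΛreal τ hτ i])

theorem inv_eq_diagonal_extendedDiag [Fintype n] [DecidableEq n]
    (hΛdiag : ∀ ζ ∈ Icc (0 : ℝ) 1, (Λ ζ).IsDiag)
    (hΛpos : ∀ ζ ∈ Icc (0 : ℝ) 1, ∀ i, 0 < (Λ ζ i i).re)
    (hΛreal : ∀ ζ ∈ Icc (0 : ℝ) 1, ∀ i, (Λ ζ i i).im = 0) {τ : ℝ} (hτ : τ ∈ Icc (0 : ℝ) 1) :
    (Λ τ)⁻¹ = diagonal fun i => (((extendedDiag Λ i τ)⁻¹ : ℝ) : ℂ) := by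
  rw [eq_diagonal_extendedDiag hΛdiag hΛreal hτ]
  refine inv_eq_right_inv ?_
  rw [diagonal_mul_diagonal, ← diagonal_one]
  congr 1
  ext i
  rw [← Complex.ofReal_mul, mul_inv_cancel₀ (extendedDiag_pos hΛpos i τ).ne', Complex.ofReal_one]

theorem mul_diagonal_resolventRate [Fintype n] [DecidableEq n] (s : ℝ)
    (hΛdiag : ∀ ζ ∈ Icc (0 : ℝ) 1, (Λ ζ).IsDiag)
    (hΛpos : ∀ ζ ∈ Icc (0 : ℝ) 1, ∀ i, 0 < (Λ ζ i i).re)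
    (hΛreal : ∀ ζ ∈ Icc (0 : ℝ) 1, ∀ i, (Λ ζ i i).im = 0) {τ : ℝ} (hτ : τ ∈ Icc (0 : ℝ) 1) :
    Λ τ * diagonal (resolventRate s Λ τ) = (s : ℂ) • 1 := by
  rw [eq_diagonal_extendedDiag hΛdiag hΛreal hτ, diagonal_mul_diagonal,
    ← diagonal_one, ← diagonal_smul]
  congr 1
  ext i
  rw [resolventRate, ← Complex.ofReal_mul, mul_left_comm,
    mul_inv_cancel₀ (extendedDiag_pos hΛpos i τ).ne', mul_one]
  simp

theorem hasDerivAt_resolventExponent [Fintype n] (s : ℝ) (hΛcont : ContinuousOn Λ (Icc 0 1))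
    (hΛpos : ∀ ζ ∈ Icc (0 : ℝ) 1, ∀ i, 0 < (Λ ζ i i).re) (ζ : ℝ) :
    HasDerivAt (resolventExponent s Λ) (resolventRate s Λ ζ) ζ :=
  hasDerivAt_pi.2 fun i => (((continuous_inv_extendedDiag hΛcont hΛpos i).integral_hasStrictDerivAt
    0 ζ).hasDerivAt.const_mul s).ofReal_comp

theorem continuous_resolventExponent [Fintype n] (s : ℝ) (hΛcont : ContinuousOn Λ (Icc 0 1))
    (hΛpos : ∀ ζ ∈ Icc (0 : ℝ) 1, ∀ i, 0 < (Λ ζ i i).re) :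
    Continuous (resolventExponent s Λ) :=
  continuous_iff_continuousAt.2 fun ζ =>
    (hasDerivAt_resolventExponent s hΛcont hΛpos ζ).continuousAt

theorem re_resolventExponent_one_neg {s : ℝ} (hs : s < 0) (hΛcont : ContinuousOn Λ (Icc 0 1))
    (hΛpos : ∀ ζ ∈ Icc (0 : ℝ) 1, ∀ i, 0 < (Λ ζ i i).re) (i : n) :
    (resolventExponent s Λ 1 i).re < 0 := by
  rw [resolventExponent, Complex.ofReal_re]
  refine mul_neg_of_neg_of_pos hs (intervalIntegral.intervalIntegral_pos_of_pos ?_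
    (fun τ => inv_pos.2 (extendedDiag_pos hΛpos i τ)) one_pos)
  exact (continuous_inv_extendedDiag hΛcont hΛpos i).intervalIntegrable 0 1

theorem smul_integral_inv_eq_diagonal [Fintype n] [DecidableEq n] (s : ℝ)
    (hΛdiag : ∀ ζ ∈ Icc (0 : ℝ) 1, (Λ ζ).IsDiag)
    (hΛpos : ∀ ζ ∈ Icc (0 : ℝ) 1, ∀ i, 0 < (Λ ζ i i).re)
    (hΛreal : ∀ ζ ∈ Icc (0 : ℝ) 1, ∀ i, (Λ ζ i i).im = 0) {ζ : ℝ} (hζ : ζ ∈ Icc (0 : ℝ) 1) :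
    ((s : ℂ) • Matrix.of fun i j => ∫ τ in (0 : ℝ)..ζ, (Λ τ)⁻¹ i j) =
      diagonal (resolventExponent s Λ ζ) := by
  have hsub : uIcc 0 ζ ⊆ Icc (0 : ℝ) 1 := uIcc_subset_Icc (left_mem_Icc.2 zero_le_one) hζ
  ext i j
  rw [Matrix.smul_apply, of_apply, intervalIntegral.integral_congr fun τ hτ => by
    rw [inv_eq_diagonal_extendedDiag hΛdiag hΛpos hΛreal (hsub hτ)]]
  rcases eq_or_ne i j with rfl | hij
  · simp only [diagonal_apply_eq, resolventExponent, intervalIntegral.integral_ofReal,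
      Complex.ofReal_mul, smul_eq_mul]
  · simp [hij]

end DiagonalCoefficient

theorem explicit_resolvent_solution_general
    (d : ℕ)
    (Λ : ℝ → Matrix (Fin d) (Fin d) ℂ)
    (hΛcont : ContinuousOn Λ (Set.Icc 0 1))
    (hΛdiag : ∀ ζ ∈ Set.Icc (0:ℝ) 1, (Λ ζ).IsDiag)
    (hΛpos : ∀ ζ ∈ Set.Icc (0:ℝ) 1, ∀ i, 0 < (Λ ζ i i).re ∧ (Λ ζ i i).im = 0)
    (s : ℝ) (hs : s < 0)
    (v : EuclideanSpace ℂ (Fin d))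
    (F : ℝ → Matrix (Fin d) (Fin d) ℂ)
    (hF : ∀ ζ : ℝ, F ζ = (s : ℂ) • Matrix.of fun i j => ∫ τ in (0:ℝ)..ζ, ((Λ τ)⁻¹ i j))
    (g₀ : EuclideanSpace ℂ (Fin d))
    (hg₀ : g₀ = Matrix.toEuclideanLin
      (NormedSpace.exp (F 1) * (1 - NormedSpace.exp ((2:ℂ) • F 1))⁻¹) v)
    (g x : ℝ → EuclideanSpace ℂ (Fin d))
    (hg : ∀ ζ : ℝ, g ζ = ((2 * s : ℝ) : ℂ) •
      Matrix.toEuclideanLin (NormedSpace.exp (F 1 - F ζ)) g₀)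
    (hx : ∀ ζ : ℝ, x ζ = Matrix.toEuclideanLin (NormedSpace.exp (F ζ - F 1)) g₀
      - ((2 * (s : ℂ))⁻¹) • g ζ) :
    IsUnit (1 - NormedSpace.exp ((2:ℂ) • F 1)) ∧
    ∃ x' : ℝ → EuclideanSpace ℂ (Fin d),
      ContinuousOn x' (Set.Icc 0 1) ∧
      (∀ ζ ∈ Set.Icc (0:ℝ) 1, HasDerivWithinAt x (x' ζ) (Set.Icc 0 1) ζ) ∧
      (∀ ζ ∈ Set.Icc (0:ℝ) 1,
        Matrix.toEuclideanLin (Λ ζ) (x' ζ) = (s : ℂ) • x ζ + g ζ) ∧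
      x 0 = v ∧ x 1 = 0 := by
  have hΛre : ∀ ζ ∈ Icc (0 : ℝ) 1, ∀ i, 0 < (Λ ζ i i).re := fun ζ hζ i => (hΛpos ζ hζ i).1
  have hΛim : ∀ ζ ∈ Icc (0 : ℝ) 1, ∀ i, (Λ ζ i i).im = 0 := fun ζ hζ i => (hΛpos ζ hζ i).2
  have h1 : (1 : ℝ) ∈ Icc (0 : ℝ) 1 := right_mem_Icc.2 zero_le_one
  set ψ := resolventExponent s Λ
  have hFψ : ∀ ζ ∈ Icc (0 : ℝ) 1, F ζ = diagonal (ψ ζ) := fun ζ hζ =>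
    (hF ζ).trans (smul_integral_inv_eq_diagonal s hΛdiag hΛre hΛim hζ)
  have hunit : IsUnit (1 - NormedSpace.exp ((2 : ℂ) • F 1)) := by
    rw [hFψ 1 h1, ← diagonal_smul]
    refine isUnit_one_sub_exp_diagonal fun i => ?_
    simpa using (re_resolventExponent_one_neg hs hΛcont hΛre i).ne
  have hx_exp : ∀ ζ, x ζ = toEuclideanLin (NormedSpace.exp (F ζ - F 1)) g₀ -
      toEuclideanLin (NormedSpace.exp (F 1 - F ζ)) g₀ := fun ζ => by
    have h2s : 2 * (s : ℂ) ≠ 0 := mul_ne_zero two_ne_zero (Complex.ofReal_ne_zero.2 hs.ne)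
    rw [hx, hg, smul_smul, Complex.ofReal_mul, Complex.ofReal_ofNat, inv_mul_cancel₀ h2s, one_smul]
  refine ⟨hunit, fun ζ => toEuclideanLin (diagonal (resolventRate s Λ ζ) *
    (NormedSpace.exp (diagonal (ψ ζ) - diagonal (ψ 1)) +
      NormedSpace.exp (diagonal (ψ 1) - diagonal (ψ ζ)))) g₀, ?_, fun ζ hζ => ?_,
    fun ζ hζ => ?_, ?_, ?_⟩
  · exact (continuous_toEuclideanLin_diagonal_mul_exp_add_exp
      (continuous_resolventRate s hΛcont hΛre) (continuous_resolventExponent s hΛcont hΛre)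
      _ g₀).continuousOn
  · exact (hasDerivAt_toEuclideanLin_exp_sub_exp (hasDerivAt_resolventExponent s hΛcont hΛre ζ)
      _ g₀).hasDerivWithinAt.congr (fun y hy => by rw [hx_exp, hFψ y hy, hFψ 1 h1])
      (by rw [hx_exp, hFψ ζ hζ, hFψ 1 h1])
  · rw [← LinearMap.comp_apply, ← toLpLin_mul_same, ← mul_assoc,
      mul_diagonal_resolventRate s hΛdiag hΛre hΛim hζ, hx_exp, hg, hFψ ζ hζ, hFψ 1 h1,
      smul_one_mul, map_smul, map_add, LinearMap.smul_apply, LinearMap.add_apply]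
    push_cast
    module
  · have hF0 : F 0 = 0 := by ext; simp [hF]
    rw [hx_exp, hF0, zero_sub, sub_zero, hg₀, toEuclideanLin_exp_neg_sub_exp_apply hunit]
  · simp [hx_exp]

/-- Explicit solution of the resolvent equation `Λ x' = s x + g` with
`x(0) = v` and `x(1) = 0`, used in the proof of Lemma 5.5. Here
`F_s(ζ) = s·∫₀^ζ Λ(τ)⁻¹ dτ`, `g₀ = e^{F_s(1)}(I − e^{2F_s(1)})⁻¹ v`,
`g(ζ) = 2s·e^{F_s(1) − F_s(ζ)}·g₀` and `x(ζ) = e^{F_s(ζ) − F_s(1)}·g₀ − (2s)⁻¹·g(ζ)`. -/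
theorem explicit_resolvent_solution
    (d : ℕ) (hd : 1 ≤ d)
    (Λ : ℝ → Matrix (Fin d) (Fin d) ℂ)
    (hΛcont : ContinuousOn Λ (Set.Icc 0 1))
    (hΛdiag : ∀ ζ ∈ Set.Icc (0:ℝ) 1, (Λ ζ).IsDiag)
    (hΛpos : ∀ ζ ∈ Set.Icc (0:ℝ) 1, ∀ i, 0 < (Λ ζ i i).re ∧ (Λ ζ i i).im = 0)
    (s : ℝ) (hs : s < 0)
    (v : EuclideanSpace ℂ (Fin d))
    (F : ℝ → Matrix (Fin d) (Fin d) ℂ)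
    (hF : ∀ ζ : ℝ, F ζ = (s : ℂ) • Matrix.of fun i j => ∫ τ in (0:ℝ)..ζ, ((Λ τ)⁻¹ i j))
    (g₀ : EuclideanSpace ℂ (Fin d))
    (hg₀ : g₀ = Matrix.toEuclideanLin
      (NormedSpace.exp (F 1) * (1 - NormedSpace.exp ((2:ℂ) • F 1))⁻¹) v)
    (g x : ℝ → EuclideanSpace ℂ (Fin d))
    (hg : ∀ ζ : ℝ, g ζ = ((2 * s : ℝ) : ℂ) •
      Matrix.toEuclideanLin (NormedSpace.exp (F 1 - F ζ)) g₀)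
    (hx : ∀ ζ : ℝ, x ζ = Matrix.toEuclideanLin (NormedSpace.exp (F ζ - F 1)) g₀
      - ((2 * (s : ℂ))⁻¹) • g ζ) :
    IsUnit (1 - NormedSpace.exp ((2:ℂ) • F 1)) ∧
    ∃ x' : ℝ → EuclideanSpace ℂ (Fin d),
      ContinuousOn x' (Set.Icc 0 1) ∧
      (∀ ζ ∈ Set.Icc (0:ℝ) 1, HasDerivWithinAt x (x' ζ) (Set.Icc 0 1) ζ) ∧
      (∀ ζ ∈ Set.Icc (0:ℝ) 1,
        Matrix.toEuclideanLin (Λ ζ) (x' ζ) = (s : ℂ) • x ζ + g ζ) ∧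
      x 0 = v ∧ x 1 = 0 :=
  explicit_resolvent_solution_general d Λ hΛcont hΛdiag hΛpos s hs v F hF g₀ hg₀ g x hg hx
end

section
/- Let n ≥ 1, k ≥ 2, and let N, L ∈ ℂ^{n×n}, r ∈ ℝ, and m, M, R > 0 satisfy: L is Hermitian with ⟨v, Lv⟩ ≥ m·‖v‖² for all v ∈ ℂ^n and operator norm ‖L‖ ≤ M; |r| ≤ R; N^k = 0; and N*L + L·N = −I + r·L. Then ‖N‖ ≤ Σ_{l=1}^{k−1} (1 + R·M)·M^{l−1}/m^l, where ‖·‖ denotes the operator norm with respect to the Euclidean norm. (Final nilpotent-part norm bound derived from the Lyapunov equation in the proof of Proposition 3.5.) -/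
/-!
Pairing the Lyapunov equation `T†S + ST = -1 + rS` with `Tw` and using coercivity of `S` gives
`m‖Tw‖² ≤ ((1 + RM)‖Tw‖ + M‖T²w‖)‖w‖`. Hence a bound `‖T²w‖ ≤ c‖Tw‖` improves to
`‖Tw‖ ≤ (1 + RM + Mc)/m · ‖w‖`. Starting from `T = 0` on `ker T` and climbing the kernels of the
powers of the nilpotent `T` produces the geometric-type sum.
-/

open Matrix ContinuousLinearMap Finset
open scoped ComplexOrder InnerProductSpace

theorem sum_range_succ_mul_pow_div_pow {K : Type*} [Field K] (a M m : K) (hm : m ≠ 0) (j : ℕ) :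
    ∑ i ∈ range (j + 1), a * M ^ i / m ^ (i + 1) =
      (a + M * ∑ i ∈ range j, a * M ^ i / m ^ (i + 1)) / m := by
  rw [sum_range_succ', mul_sum, add_div, sum_div, add_comm]
  congr 1
  · simp
  · refine sum_congr rfl fun i _ => ?_
    field_simp
    ring

section Lyapunov

variable {𝕜 E : Type*} [RCLike 𝕜] [NormedAddCommGroup E] [InnerProductSpace 𝕜 E] [CompleteSpace E]
  {T S : E →L[𝕜] E} {r m M R : ℝ}

theorem inner_apply_map_apply_of_lyapunov (hLyap : adjoint T * S + S * T = -1 + (r : 𝕜) • S)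
    (w : E) :
    ⟪T w, S (T w)⟫_𝕜 = -⟪T w, w⟫_𝕜 + r * ⟪T w, S w⟫_𝕜 - ⟪T (T w), S w⟫_𝕜 := by
  have h := congr_arg (fun A : E →L[𝕜] E => ⟪T w, A w⟫_𝕜) hLyap
  simp only [_root_.add_apply, mul_apply_eq_comp, _root_.neg_apply, one_apply_eq_self,
    _root_.smul_apply, inner_add_right, inner_neg_right, inner_smul_right, adjoint_inner_right] at h
  linear_combination h

variable (hLyap : adjoint T * S + S * T = -1 + (r : 𝕜) • S)
  (hlow : ∀ v, m * ‖v‖ ^ 2 ≤ RCLike.re ⟪v, S v⟫_𝕜) (hS : ‖S‖ ≤ M) (hr : |r| ≤ R)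
include hLyap hlow hS hr

theorem sq_norm_apply_le_of_lyapunov (w : E) :
    m * ‖T w‖ ^ 2 ≤ ((1 + R * M) * ‖T w‖ + M * ‖T (T w)‖) * ‖w‖ := by
  have hR : 0 ≤ R := (abs_nonneg r).trans hr
  have hSw : ‖S w‖ ≤ M * ‖w‖ := (S.le_opNorm w).trans (by gcongr)
  calc m * ‖T w‖ ^ 2 ≤ RCLike.re ⟪T w, S (T w)⟫_𝕜 := hlow _
    _ ≤ ‖-⟪T w, w⟫_𝕜 + r * ⟪T w, S w⟫_𝕜 - ⟪T (T w), S w⟫_𝕜‖ := by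
      rw [inner_apply_map_apply_of_lyapunov hLyap]
      exact RCLike.re_le_norm _
    _ ≤ ‖⟪T w, w⟫_𝕜‖ + |r| * ‖⟪T w, S w⟫_𝕜‖ + ‖⟪T (T w), S w⟫_𝕜‖ := by
      refine (norm_sub_le _ _).trans ?_
      gcongr
      refine (norm_add_le _ _).trans ?_
      rw [norm_neg, norm_mul, RCLike.norm_ofReal]
    _ ≤ ‖T w‖ * ‖w‖ + R * (‖T w‖ * (M * ‖w‖)) + ‖T (T w)‖ * (M * ‖w‖) := by
      gcongr <;> exact (norm_inner_le_norm _ _).trans (by gcongr)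
    _ = ((1 + R * M) * ‖T w‖ + M * ‖T (T w)‖) * ‖w‖ := by ring

theorem norm_apply_le_of_lyapunov_of_norm_apply_apply_le (hm : 0 < m) {c : ℝ} (hc : 0 ≤ c)
    {w : E} (hw : ‖T (T w)‖ ≤ c * ‖T w‖) :
    ‖T w‖ ≤ (1 + R * M + M * c) / m * ‖w‖ := by
  have hM : 0 ≤ M := (norm_nonneg S).trans hS
  have hR : 0 ≤ R := (abs_nonneg r).trans hr
  have key : ‖T w‖ * (m * ‖T w‖) ≤ ‖T w‖ * ((1 + R * M + M * c) * ‖w‖) :=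
    calc ‖T w‖ * (m * ‖T w‖) = m * ‖T w‖ ^ 2 := by ring
      _ ≤ ((1 + R * M) * ‖T w‖ + M * ‖T (T w)‖) * ‖w‖ :=
        sq_norm_apply_le_of_lyapunov hLyap hlow hS hr w
      _ ≤ ((1 + R * M) * ‖T w‖ + M * (c * ‖T w‖)) * ‖w‖ := by gcongr
      _ = ‖T w‖ * ((1 + R * M + M * c) * ‖w‖) := by ring
  rcases (norm_nonneg (T w)).eq_or_lt with hTw | hTw
  · rw [← hTw]
    positivity
  · rw [div_mul_eq_mul_div, le_div_iff₀ hm, mul_comm]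
    exact le_of_mul_le_mul_left key hTw

theorem norm_apply_le_of_lyapunov_of_pow_apply_eq_zero (hm : 0 < m) (j : ℕ) {w : E}
    (hw : (T ^ (j + 1)) w = 0) :
    ‖T w‖ ≤ (∑ i ∈ range j, (1 + R * M) * M ^ i / m ^ (i + 1)) * ‖w‖ := by
  have hM : 0 ≤ M := (norm_nonneg S).trans hS
  have hR : 0 ≤ R := (abs_nonneg r).trans hr
  induction j generalizing w with
  | zero => simp_all
  | succ j ih =>
    have hTw := ih (w := T w) (by rwa [pow_succ, mul_apply_eq_comp] at hw)
    rw [sum_range_succ_mul_pow_div_pow _ _ _ hm.ne']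
    exact norm_apply_le_of_lyapunov_of_norm_apply_apply_le hLyap hlow hS hr hm
      (sum_nonneg fun i _ => by positivity) hTw

theorem opNorm_le_of_lyapunov_of_pow_eq_zero (hm : 0 < m) {j : ℕ} (hT : T ^ (j + 1) = 0) :
    ‖T‖ ≤ ∑ i ∈ range j, (1 + R * M) * M ^ i / m ^ (i + 1) := by
  have hM : 0 ≤ M := (norm_nonneg S).trans hS
  have hR : 0 ≤ R := (abs_nonneg r).trans hr
  refine opNorm_le_bound _ (sum_nonneg fun i _ => by positivity) fun w => ?_
  exact norm_apply_le_of_lyapunov_of_pow_apply_eq_zero hLyap hlow hS hr hm j (by simp [hT])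

end Lyapunov

theorem nilpotent_norm_bound_general
    (n : ℕ) (k : ℕ)
    (N L : Matrix (Fin n) (Fin n) ℂ) (r : ℝ) (m M R : ℝ)
    (hm : 0 < m)
    (hLlower : ∀ v : EuclideanSpace ℂ (Fin n),
      (↑(m * ‖v‖ ^ 2) : ℂ) ≤ dotProduct (star v) (L.mulVec v))
    (hLnorm : ‖Matrix.toEuclideanCLM (𝕜 := ℂ) L‖ ≤ M)
    (hr : |r| ≤ R)
    (hNnilp : N ^ k = 0)
    (hLyap : Nᴴ * L + L * N = -1 + (r : ℂ) • L) :
    ‖Matrix.toEuclideanCLM (𝕜 := ℂ) N‖ ≤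
      ∑ l ∈ Finset.Icc 1 (k - 1), (1 + R * M) * M ^ (l - 1) / m ^ l := by
  have hsum : ∑ l ∈ Icc 1 (k - 1), (1 + R * M) * M ^ (l - 1) / m ^ l =
      ∑ i ∈ range (k - 1), (1 + R * M) * M ^ i / m ^ (i + 1) := by
    rw [← Ico_add_one_right_eq_Icc, sum_Ico_eq_sum_range]
    simp only [add_comm, add_tsub_cancel_left, add_tsub_cancel_right]
  rw [hsum]
  refine opNorm_le_of_lyapunov_of_pow_eq_zero ?_ (fun v => ?_) hLnorm hr hm ?_
  · rw [← star_eq_adjoint, ← map_star, star_eq_conjTranspose, ← map_mul, ← map_mul, ← map_add,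
      hLyap, map_add, map_neg, map_one, map_smul]
    rfl
  · have h : ((m * ‖v‖ ^ 2 : ℝ) : ℂ) ≤ ⟪v, toEuclideanCLM (𝕜 := ℂ) L v⟫_ℂ := by
      rw [EuclideanSpace.inner_eq_star_dotProduct, ofLp_toEuclideanCLM, dotProduct_comm]
      exact hLlower v
    simpa only [Complex.ofReal_re, RCLike.re_to_complex] using (Complex.le_def.mp h).1
  · rw [← map_pow, pow_eq_zero_of_le (by omega) hNnilp, map_zero]

/-- Nilpotent-part norm bound from the Lyapunov equation
`N*L + LN = −I + rL` (proof of Proposition 3.5): if `L` is Hermitian with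
`m‖v‖² ≤ ⟨v, Lv⟩`, `‖L‖ ≤ M`, `|r| ≤ R` and `Nᵏ = 0` (`k ≥ 2`), then
`‖N‖ ≤ Σ_{l=1}^{k−1} (1 + R·M)·M^{l−1}/mˡ` (operator norms w.r.t. the Euclidean norm). -/
theorem nilpotent_norm_bound
    (n : ℕ) (hn : 1 ≤ n) (k : ℕ) (hk : 2 ≤ k)
    (N L : Matrix (Fin n) (Fin n) ℂ) (r : ℝ) (m M R : ℝ)
    (hm : 0 < m) (hM : 0 < M) (hR : 0 < R)
    (hLherm : L.IsHermitian)
    (hLlower : ∀ v : EuclideanSpace ℂ (Fin n),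
      (↑(m * ‖v‖ ^ 2) : ℂ) ≤ dotProduct (star v) (L.mulVec v))
    (hLnorm : ‖Matrix.toEuclideanCLM (𝕜 := ℂ) L‖ ≤ M)
    (hr : |r| ≤ R)
    (hNnilp : N ^ k = 0)
    (hLyap : Nᴴ * L + L * N = -1 + (r : ℂ) • L) :
    ‖Matrix.toEuclideanCLM (𝕜 := ℂ) N‖ ≤
      ∑ l ∈ Finset.Icc 1 (k - 1), (1 + R * M) * M ^ (l - 1) / m ^ l :=
  nilpotent_norm_bound_general n k N L r m M R hm hLlower hLnorm hr hNnilp hLyap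
end

section
/- Let X be a complex separable Hilbert space and (Eₙ)_{n∈ℕ} a sequence of bounded projections on X (Eₙ² = Eₙ) with Eₙ∘Eₘ = 0 for n ≠ m, and let 0 < m₁ ≤ m₂ be constants with m₁·‖x‖² ≤ Σₙ ‖Eₙx‖² ≤ m₂·‖x‖² for all x ∈ X. Let (Tₙ)_{n∈ℕ} be bounded linear operators on X with Tₙ = Eₙ∘Tₙ∘Eₙ for every n and c := supₙ ‖Tₙ‖ < ∞. Then for every x ∈ X the series Σₙ TₙEₙx converges in X and ‖Σₙ TₙEₙx‖² ≤ (m₂/m₁)·c²·‖x‖². (Core estimate in the proof of Lemma 3.2.) -/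
/-!
Each `yₙ := TₙEₙx` lies in the range of `Eₙ`, and disjointness gives `Eₘ (Σₙ yₙ) = yₘ`.
The lower Riesz bound, applied to partial sums, therefore controls `‖Σₙ∈s yₙ‖²` by
`Σₙ∈s ‖yₙ‖² / m₁`; this makes `Σ yₙ` Cauchy and bounds its sum, while `‖yₙ‖ ≤ c‖Eₙx‖`
and the upper Riesz bound give `Σₙ ‖yₙ‖² ≤ c² m₂ ‖x‖²`.
-/

open Filter Topology

section DisjointProjections

variable {𝕜 X ι : Type*} [NormedField 𝕜] [NormedAddCommGroup X] [NormedSpace 𝕜 X]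
  {P : ι → X →L[𝕜] X}

theorem apply_sum_of_disjoint_projections [DecidableEq ι]
    (hdisj : ∀ n m, n ≠ m → (P n).comp (P m) = 0)
    {y : ι → X} (hy : ∀ n, P n (y n) = y n) (s : Finset ι) (m : ι) :
    P m (∑ n ∈ s, y n) = if m ∈ s then y m else 0 := by
  have hPy : ∀ n, P m (y n) = if m = n then y n else 0 := by
    intro n
    split_ifs with h
    · rw [h, hy]
    · rw [← hy n, ← ContinuousLinearMap.comp_apply, hdisj m n h, zero_apply]
  rw [map_sum, Finset.sum_congr rfl fun n _ => hPy n, Finset.sum_ite_eq]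

theorem mul_norm_sum_sq_le_sum_norm_sq
    (hdisj : ∀ n m, n ≠ m → (P n).comp (P m) = 0) {m₁ : ℝ}
    (hlower : ∀ x : X, m₁ * ‖x‖ ^ 2 ≤ ∑' n, ‖P n x‖ ^ 2)
    {y : ι → X} (hy : ∀ n, P n (y n) = y n) (s : Finset ι) :
    m₁ * ‖∑ n ∈ s, y n‖ ^ 2 ≤ ∑ n ∈ s, ‖y n‖ ^ 2 := by
  classical
  have hP := apply_sum_of_disjoint_projections hdisj hy s
  have htsum : ∑' m, ‖P m (∑ n ∈ s, y n)‖ ^ 2 = ∑ m ∈ s, ‖y m‖ ^ 2 := by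
    rw [tsum_eq_sum (s := s) fun m hm => by simp [hP m, hm]]
    exact Finset.sum_congr rfl fun m hm => by rw [hP m, if_pos hm]
  exact htsum ▸ hlower _

variable {m₁ : ℝ} (hdisj : ∀ n m, n ≠ m → (P n).comp (P m) = 0)
  (hlower : ∀ x : X, m₁ * ‖x‖ ^ 2 ≤ ∑' n, ‖P n x‖ ^ 2)
  {y : ι → X} (hy : ∀ n, P n (y n) = y n) (hsq : Summable fun n => ‖y n‖ ^ 2)
include hdisj hlower hy hsq

theorem summable_of_summable_norm_sq [CompleteSpace X] (hm₁ : 0 < m₁) : Summable y := by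
  refine summable_iff_vanishing_norm.2 fun ε hε => ?_
  obtain ⟨s, hs⟩ := summable_iff_vanishing_norm.1 hsq (m₁ * ε ^ 2) (by positivity)
  refine ⟨s, fun t ht => ?_⟩
  have hsmall : ∑ n ∈ t, ‖y n‖ ^ 2 < m₁ * ε ^ 2 := (le_abs_self _).trans_lt (hs t ht)
  have hsq_lt : ‖∑ n ∈ t, y n‖ ^ 2 < ε ^ 2 := lt_of_mul_lt_mul_left
    ((mul_norm_sum_sq_le_sum_norm_sq hdisj hlower hy t).trans_lt hsmall) hm₁.le
  exact lt_of_pow_lt_pow_left₀ 2 hε.le hsq_lt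

theorem mul_norm_tsum_sq_le_tsum_norm_sq (hy_sum : Summable y) :
    m₁ * ‖∑' n, y n‖ ^ 2 ≤ ∑' n, ‖y n‖ ^ 2 := by
  have hlim : Tendsto (fun s : Finset ι => m₁ * ‖∑ n ∈ s, y n‖ ^ 2) atTop
      (𝓝 (m₁ * ‖∑' n, y n‖ ^ 2)) :=
    ((continuous_norm.pow 2).const_mul m₁).continuousAt.tendsto.comp hy_sum.hasSum
  exact le_of_tendsto' hlim fun s =>
    (mul_norm_sum_sq_le_sum_norm_sq hdisj hlower hy s).trans
      (hsq.sum_le_tsum s fun n _ => by positivity)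

end DisjointProjections

theorem riesz_basis_diagonal_operator_bound_general
    {X : Type*} [NormedAddCommGroup X] [InnerProductSpace ℂ X] [CompleteSpace X]
    (E : ℕ → X →L[ℂ] X)
    (hproj : ∀ n, (E n).comp (E n) = E n)
    (hdisj : ∀ n m, n ≠ m → (E n).comp (E m) = 0)
    (m₁ m₂ : ℝ) (hm₁ : 0 < m₁)
    (hsum : ∀ x : X, Summable (fun n => ‖E n x‖ ^ 2))
    (hlower : ∀ x : X, m₁ * ‖x‖ ^ 2 ≤ ∑' n, ‖E n x‖ ^ 2)
    (hupper : ∀ x : X, ∑' n, ‖E n x‖ ^ 2 ≤ m₂ * ‖x‖ ^ 2)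
    (T : ℕ → X →L[ℂ] X)
    (hT : ∀ n, T n = (E n).comp ((T n).comp (E n)))
    (c : ℝ) (hc : ∀ n, ‖T n‖ ≤ c) :
    ∀ x : X, Summable (fun n => T n (E n x)) ∧
      ‖∑' n, T n (E n x)‖ ^ 2 ≤ (m₂ / m₁) * c ^ 2 * ‖x‖ ^ 2 := by
  intro x
  have hrange : ∀ n, E n (T n (E n x)) = T n (E n x) := fun n => by
    rw [hT n]
    simp only [ContinuousLinearMap.comp_apply]
    exact DFunLike.congr_fun (hproj n) _
  have hbound : ∀ n, ‖T n (E n x)‖ ^ 2 ≤ c ^ 2 * ‖E n x‖ ^ 2 := fun n => by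
    rw [← mul_pow]
    exact pow_le_pow_left₀ (norm_nonneg _)
      (((T n).le_opNorm _).trans (by gcongr; exact hc n)) 2
  have hsq : Summable fun n => ‖T n (E n x)‖ ^ 2 :=
    ((hsum x).mul_left (c ^ 2)).of_nonneg_of_le (fun n => by positivity) hbound
  have hy := summable_of_summable_norm_sq hdisj hlower hrange hsq hm₁
  refine ⟨hy, ?_⟩
  rw [div_mul_eq_mul_div, div_mul_eq_mul_div, le_div_iff₀ hm₁, mul_comm]
  calc m₁ * ‖∑' n, T n (E n x)‖ ^ 2 ≤ ∑' n, ‖T n (E n x)‖ ^ 2 :=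
        mul_norm_tsum_sq_le_tsum_norm_sq hdisj hlower hrange hsq hy
    _ ≤ ∑' n, c ^ 2 * ‖E n x‖ ^ 2 := hsq.tsum_le_tsum hbound ((hsum x).mul_left _)
    _ = c ^ 2 * ∑' n, ‖E n x‖ ^ 2 := tsum_mul_left
    _ ≤ c ^ 2 * (m₂ * ‖x‖ ^ 2) := by gcongr; exact hupper x
    _ = m₂ * c ^ 2 * ‖x‖ ^ 2 := by ring

/-- **core estimate in the proof of Lemma 3.2.** Let `(Eₙ)` be mutually
disjoint bounded projections on a separable complex Hilbert space whose ranges form a Riesz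
basis of subspaces (`m₁‖x‖² ≤ Σₙ‖Eₙx‖² ≤ m₂‖x‖²`), and let `(Tₙ)` be bounded operators with
`Tₙ = Eₙ∘Tₙ∘Eₙ` and `‖Tₙ‖ ≤ c`. Then `Σₙ TₙEₙx` converges and
`‖Σₙ TₙEₙx‖² ≤ (m₂/m₁)·c²·‖x‖²`. -/
theorem riesz_basis_diagonal_operator_bound
    {X : Type*} [NormedAddCommGroup X] [InnerProductSpace ℂ X] [CompleteSpace X]
    [TopologicalSpace.SeparableSpace X]
    (E : ℕ → X →L[ℂ] X)
    (hproj : ∀ n, (E n).comp (E n) = E n)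
    (hdisj : ∀ n m, n ≠ m → (E n).comp (E m) = 0)
    (m₁ m₂ : ℝ) (hm₁ : 0 < m₁) (hm₁₂ : m₁ ≤ m₂)
    (hsum : ∀ x : X, Summable (fun n => ‖E n x‖ ^ 2))
    (hlower : ∀ x : X, m₁ * ‖x‖ ^ 2 ≤ ∑' n, ‖E n x‖ ^ 2)
    (hupper : ∀ x : X, ∑' n, ‖E n x‖ ^ 2 ≤ m₂ * ‖x‖ ^ 2)
    (T : ℕ → X →L[ℂ] X)
    (hT : ∀ n, T n = (E n).comp ((T n).comp (E n)))
    (c : ℝ) (hc : ∀ n, ‖T n‖ ≤ c) :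
    ∀ x : X, Summable (fun n => T n (E n x)) ∧
      ‖∑' n, T n (E n x)‖ ^ 2 ≤ (m₂ / m₁) * c ^ 2 * ‖x‖ ^ 2 :=
  riesz_basis_diagonal_operator_bound_general E hproj hdisj m₁ m₂ hm₁ hsum hlower hupper T hT c hc
end

section
/- Let X be a complex separable Hilbert space, (Eₙ)_{n∈ℕ} bounded projections on X with Eₙ∘Eₘ = 0 for n ≠ m and constants 0 < m₁ ≤ m₂ with m₁·‖x‖² ≤ Σₙ ‖Eₙx‖² ≤ m₂·‖x‖² for all x ∈ X. Let (sₙ)_{n∈ℕ} ⊂ ℂ, M₀ > 0, K ∈ ℕ, and let (Nₙ) be bounded operators on X with Nₙ = Eₙ∘Nₙ∘Eₙ, ‖Nₙ‖ ≤ M₀ and Nₙ^K = 0 for all n. Then for every s ∈ ℂ with δ := infₙ |s − sₙ| > M₀, the series R(s)x := Σₙ Σ_{j=0}^{K−1} (s − sₙ)^{−(j+1)}·Nₙ^j·Eₙ·x (with Nₙ⁰Eₙ := Eₙ) converges for every x ∈ X and defines a bounded operator with ‖R(s)‖ ≤ (m₂/m₁)^{1/2}/(δ − M₀). (Explicit form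 of the resolvent bound of Lemma 3.2 for a discrete Riesz spectral operator A = Σₙ (sₙ + Nₙ)Eₙ, whose resolvent at s is R(s).) -/
/-!
Write `yₙ = Σ_{j<K} (s - sₙ)^{-(j+1)} Nₙʲ Eₙ x`. Since `Nₙ = Eₙ Nₙ Eₙ`, each `yₙ` lies in the range
of the projection `Eₙ`, so `Eₘ yₙ = 0` for `m ≠ n`. Because `‖(s - sₙ)⁻¹ Nₙ‖ ≤ M₀/δ < 1`, a geometric
series gives `‖yₙ‖ ≤ ‖Eₙ x‖/(δ - M₀)`, and the upper Riesz inequality yields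
`Σ ‖yₙ‖² ≤ m₂ ‖x‖²/(δ - M₀)²`. The lower Riesz inequality, applied to partial sums of `Σ yₙ`, whose
`m`-th components are the `yₘ`, shows that the series is Cauchy and that `m₁ ‖Σ yₙ‖² ≤ Σ ‖yₙ‖²`.
-/

open Finset

section RieszSynthesis

variable {𝕜 X : Type*} [NormedField 𝕜] [NormedAddCommGroup X] [NormedSpace 𝕜 X]
  {E : ℕ → X →L[𝕜] X} {y : ℕ → X}

theorem apply_eq_ite_of_comp_eq_zero (hdisj : ∀ n m, n ≠ m → (E n).comp (E m) = 0)
    (hy : ∀ n, E n (y n) = y n) (m n : ℕ) : E m (y n) = if n = m then y n else 0 := by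
  split_ifs with h
  · exact h ▸ hy n
  · rw [← hy n, ← ContinuousLinearMap.comp_apply, hdisj m n (Ne.symm h), zero_apply]

theorem mul_norm_sum_sq_le_of_comp_eq_zero (hdisj : ∀ n m, n ≠ m → (E n).comp (E m) = 0)
    {m₁ : ℝ} (hlower : ∀ x : X, m₁ * ‖x‖ ^ 2 ≤ ∑' n, ‖E n x‖ ^ 2)
    (hy : ∀ n, E n (y n) = y n) (F : Finset ℕ) :
    m₁ * ‖∑ n ∈ F, y n‖ ^ 2 ≤ ∑ n ∈ F, ‖y n‖ ^ 2 := by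
  have hEF : ∀ m, E m (∑ n ∈ F, y n) = if m ∈ F then y m else 0 := fun m => by
    simp only [map_sum, apply_eq_ite_of_comp_eq_zero hdisj hy m, sum_ite_eq']
  calc m₁ * ‖∑ n ∈ F, y n‖ ^ 2 ≤ ∑' m, ‖E m (∑ n ∈ F, y n)‖ ^ 2 := hlower _
    _ = ∑ m ∈ F, ‖y m‖ ^ 2 := by
      rw [tsum_eq_sum (s := F) fun m hm => by simp [hEF, hm]]
      exact sum_congr rfl fun m hm => by simp [hEF, hm]

theorem mul_norm_tsum_sq_le_of_comp_eq_zero (hdisj : ∀ n m, n ≠ m → (E n).comp (E m) = 0)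
    {m₁ : ℝ} (hlower : ∀ x : X, m₁ * ‖x‖ ^ 2 ≤ ∑' n, ‖E n x‖ ^ 2)
    (hy : ∀ n, E n (y n) = y n) (hY : Summable y) :
    m₁ * ‖∑' n, y n‖ ^ 2 ≤ ∑' n, ‖y n‖ ^ 2 := by
  have hEY : ∀ m, E m (∑' n, y n) = y m := fun m => by
    rw [(E m).map_tsum hY, tsum_congr (apply_eq_ite_of_comp_eq_zero hdisj hy m), tsum_ite_eq]
  simpa only [hEY] using hlower (∑' n, y n)

variable [CompleteSpace X]

theorem summable_of_summable_norm_sq_of_comp_eq_zero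
    (hdisj : ∀ n m, n ≠ m → (E n).comp (E m) = 0)
    {m₁ : ℝ} (hm₁ : 0 < m₁) (hlower : ∀ x : X, m₁ * ‖x‖ ^ 2 ≤ ∑' n, ‖E n x‖ ^ 2)
    (hy : ∀ n, E n (y n) = y n) (hsq : Summable fun n => ‖y n‖ ^ 2) : Summable y := by
  rw [summable_iff_vanishing_norm]
  intro ε hε
  obtain ⟨F, hF⟩ := summable_iff_vanishing_norm.1 hsq (m₁ * ε ^ 2) (by positivity)
  refine ⟨F, fun t ht => ?_⟩
  have htail : ∑ n ∈ t, ‖y n‖ ^ 2 < m₁ * ε ^ 2 := by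
    simpa [Real.norm_of_nonneg (sum_nonneg fun n _ => sq_nonneg ‖y n‖)] using hF t ht
  have hsq_lt : ‖∑ n ∈ t, y n‖ ^ 2 < ε ^ 2 :=
    lt_of_mul_lt_mul_left ((mul_norm_sum_sq_le_of_comp_eq_zero hdisj hlower hy t).trans_lt htail)
      hm₁.le
  exact lt_of_pow_lt_pow_left₀ 2 hε.le hsq_lt

end RieszSynthesis

theorem ContinuousLinearMap.apply_pow_apply_of_comp_eq {R M : Type*} [Semiring R]
    [TopologicalSpace M] [AddCommMonoid M] [Module R M] {P T : M →L[R] M}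
    (hP : P.comp P = P) (hT : P.comp T = T) (j : ℕ) (v : M) :
    P ((T ^ j) (P v)) = (T ^ j) (P v) := by
  cases j with
  | zero => simpa using congr($hP v)
  | succ j => simpa [pow_succ'] using congr($hT ((T ^ j) (P v)))

section TruncatedResolvent

variable {𝕜 X : Type*} [NontriviallyNormedField 𝕜] [NormedAddCommGroup X] [NormedSpace 𝕜 X]

theorem ContinuousLinearMap.norm_pow_apply_le {T : X →L[𝕜] X} {M : ℝ} (hT : ‖T‖ ≤ M)
    (j : ℕ) (v : X) : ‖(T ^ j) v‖ ≤ M ^ j * ‖v‖ := by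
  induction j with
  | zero => simp
  | succ j ih =>
    rw [pow_succ', mul_apply_eq_comp, pow_succ', mul_assoc]
    exact T.le_of_opNorm_le_of_le hT ih

theorem sum_range_inv_pow_succ_mul_pow_le {M δ : ℝ} (hM : 0 ≤ M) (hMδ : M < δ) (K : ℕ) :
    ∑ j ∈ range K, δ⁻¹ ^ (j + 1) * M ^ j ≤ (δ - M)⁻¹ := by
  have hδ : 0 < δ := hM.trans_lt hMδ
  have hr : M / δ < 1 := (div_lt_one hδ).2 hMδ
  calc ∑ j ∈ range K, δ⁻¹ ^ (j + 1) * M ^ j = δ⁻¹ * ∑ j ∈ range K, (M / δ) ^ j := by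
        rw [mul_sum]; exact sum_congr rfl fun j _ => by ring
    _ ≤ δ⁻¹ * ((M / δ) ^ 0 / (1 - M / δ)) := by
        rw [range_eq_Ico]
        exact mul_le_mul_of_nonneg_left (geom_sum_Ico_le_of_lt_one (by positivity) hr)
          (by positivity)
    _ = (δ - M)⁻¹ := by field_simp

theorem norm_sum_inv_pow_smul_pow_apply_le {T : X →L[𝕜] X} {M δ : ℝ} (hT : ‖T‖ ≤ M)
    (hMδ : M < δ) {w : 𝕜} (hw : δ ≤ ‖w‖) (K : ℕ) (v : X) :
    ‖∑ j ∈ range K, w⁻¹ ^ (j + 1) • (T ^ j) v‖ ≤ (δ - M)⁻¹ * ‖v‖ := by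
  have hM : 0 ≤ M := (norm_nonneg T).trans hT
  have hδ : 0 < δ := hM.trans_lt hMδ
  have hw' : ‖w‖⁻¹ ≤ δ⁻¹ := inv_anti₀ hδ hw
  calc ‖∑ j ∈ range K, w⁻¹ ^ (j + 1) • (T ^ j) v‖
      ≤ ∑ j ∈ range K, ‖w⁻¹ ^ (j + 1) • (T ^ j) v‖ := norm_sum_le _ _
    _ ≤ ∑ j ∈ range K, δ⁻¹ ^ (j + 1) * M ^ j * ‖v‖ := sum_le_sum fun j _ => by
        rw [norm_smul, norm_pow, norm_inv, mul_assoc]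
        exact mul_le_mul (pow_le_pow_left₀ (by positivity) hw' _) (T.norm_pow_apply_le hT j v)
          (norm_nonneg _) (by positivity)
    _ = (∑ j ∈ range K, δ⁻¹ ^ (j + 1) * M ^ j) * ‖v‖ := (sum_mul ..).symm
    _ ≤ (δ - M)⁻¹ * ‖v‖ :=
        mul_le_mul_of_nonneg_right (sum_range_inv_pow_succ_mul_pow_le hM hMδ K) (norm_nonneg _)

end TruncatedResolvent

theorem Real.le_sqrt_div_mul_of_mul_sq_le {a b m₁ m₂ : ℝ} (hm₁ : 0 < m₁) (ha : 0 ≤ a)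
    (hb : 0 ≤ b) (h : m₁ * a ^ 2 ≤ m₂ * b ^ 2) : a ≤ √(m₂ / m₁) * b := by
  have h' : a ^ 2 ≤ m₂ / m₁ * b ^ 2 := by
    rw [div_mul_eq_mul_div, le_div_iff₀ hm₁]; linarith
  calc a = √(a ^ 2) := (Real.sqrt_sq ha).symm
    _ ≤ √(m₂ / m₁ * b ^ 2) := Real.sqrt_le_sqrt h'
    _ = √(m₂ / m₁) * b := by rw [Real.sqrt_mul' _ (sq_nonneg b), Real.sqrt_sq hb]

theorem discrete_riesz_spectral_resolvent_bound_general
    {X : Type*} [NormedAddCommGroup X] [InnerProductSpace ℂ X] [CompleteSpace X]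
    (E : ℕ → X →L[ℂ] X)
    (hproj : ∀ n, (E n).comp (E n) = E n)
    (hdisj : ∀ n m, n ≠ m → (E n).comp (E m) = 0)
    (m₁ m₂ : ℝ) (hm₁ : 0 < m₁)
    (hsum : ∀ x : X, Summable (fun n => ‖E n x‖ ^ 2))
    (hlower : ∀ x : X, m₁ * ‖x‖ ^ 2 ≤ ∑' n, ‖E n x‖ ^ 2)
    (hupper : ∀ x : X, ∑' n, ‖E n x‖ ^ 2 ≤ m₂ * ‖x‖ ^ 2)
    (s' : ℕ → ℂ) (M₀ : ℝ) (K : ℕ)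
    (N : ℕ → X →L[ℂ] X)
    (hN : ∀ n, N n = (E n).comp ((N n).comp (E n)))
    (hNbound : ∀ n, ‖N n‖ ≤ M₀)
    (s : ℂ) (δ : ℝ)
    (hδ : δ = ⨅ n, ‖s - s' n‖)
    (hδM₀ : M₀ < δ) :
    ∀ x : X,
      Summable (fun n => ∑ j ∈ Finset.range K,
        ((s - s' n)⁻¹ ^ (j + 1)) • ((N n) ^ j) (E n x)) ∧
      ‖∑' n, ∑ j ∈ Finset.range K,
          ((s - s' n)⁻¹ ^ (j + 1)) • ((N n) ^ j) (E n x)‖ ≤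
        Real.sqrt (m₂ / m₁) / (δ - M₀) * ‖x‖ := by
  intro x
  have hδle : ∀ n, δ ≤ ‖s - s' n‖ := fun n =>
    hδ ▸ ciInf_le ⟨0, by rintro _ ⟨n, rfl⟩; exact norm_nonneg _⟩ n
  have hEN : ∀ n, (E n).comp (N n) = N n := fun n => by
    rw [hN n, ← ContinuousLinearMap.comp_assoc, hproj n]
  set y := fun n => ∑ j ∈ range K, (s - s' n)⁻¹ ^ (j + 1) • (N n ^ j) (E n x)
  set c := (δ - M₀)⁻¹
  have hEy : ∀ n, E n (y n) = y n := fun n => by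
    simp only [y, map_sum, map_smul,
      ContinuousLinearMap.apply_pow_apply_of_comp_eq (hproj n) (hEN n)]
  have hy_sq : ∀ n, ‖y n‖ ^ 2 ≤ c ^ 2 * ‖E n x‖ ^ 2 := fun n => by
    rw [← mul_pow]
    exact pow_le_pow_left₀ (norm_nonneg _)
      (norm_sum_inv_pow_smul_pow_apply_le (hNbound n) hδM₀ (hδle n) K (E n x)) 2
  have hsq : Summable fun n => ‖y n‖ ^ 2 :=
    ((hsum x).mul_left _).of_nonneg_of_le (fun n => sq_nonneg _) hy_sq
  have hY : Summable y := summable_of_summable_norm_sq_of_comp_eq_zero hdisj hm₁ hlower hEy hsq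
  refine ⟨hY, ?_⟩
  rw [div_eq_mul_inv, mul_assoc]
  refine Real.le_sqrt_div_mul_of_mul_sq_le hm₁ (norm_nonneg _)
    (mul_nonneg (inv_nonneg.2 (sub_nonneg.2 hδM₀.le)) (norm_nonneg x)) ?_
  calc m₁ * ‖∑' n, y n‖ ^ 2 ≤ ∑' n, ‖y n‖ ^ 2 :=
        mul_norm_tsum_sq_le_of_comp_eq_zero hdisj hlower hEy hY
    _ ≤ ∑' n, c ^ 2 * ‖E n x‖ ^ 2 := hsq.tsum_le_tsum hy_sq ((hsum x).mul_left _)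
    _ = c ^ 2 * ∑' n, ‖E n x‖ ^ 2 := tsum_mul_left
    _ ≤ c ^ 2 * (m₂ * ‖x‖ ^ 2) := mul_le_mul_of_nonneg_left (hupper x) (sq_nonneg c)
    _ = m₂ * (c * ‖x‖) ^ 2 := by ring

/-- **explicit resolvent bound of Lemma 3.2.** For a discrete Riesz spectral
operator `A = Σₙ (sₙ + Nₙ)Eₙ` with spectral projections `Eₙ` whose ranges form a Riesz basis
of subspaces, uniformly bounded uniformly nilpotent parts `Nₙ`, and `δ = infₙ|s − sₙ| > M₀`,
the series `R(s)x = Σₙ Σ_{j=0}^{K−1} (s−sₙ)^{−(j+1)}·Nₙʲ·Eₙ·x` converges for every `x` and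
`‖R(s)x‖ ≤ √(m₂/m₁)/(δ − M₀)·‖x‖`. -/
theorem discrete_riesz_spectral_resolvent_bound
    {X : Type*} [NormedAddCommGroup X] [InnerProductSpace ℂ X] [CompleteSpace X]
    [TopologicalSpace.SeparableSpace X]
    (E : ℕ → X →L[ℂ] X)
    (hproj : ∀ n, (E n).comp (E n) = E n)
    (hdisj : ∀ n m, n ≠ m → (E n).comp (E m) = 0)
    (m₁ m₂ : ℝ) (hm₁ : 0 < m₁) (hm₁₂ : m₁ ≤ m₂)
    (hsum : ∀ x : X, Summable (fun n => ‖E n x‖ ^ 2))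
    (hlower : ∀ x : X, m₁ * ‖x‖ ^ 2 ≤ ∑' n, ‖E n x‖ ^ 2)
    (hupper : ∀ x : X, ∑' n, ‖E n x‖ ^ 2 ≤ m₂ * ‖x‖ ^ 2)
    (s' : ℕ → ℂ) (M₀ : ℝ) (hM₀ : 0 < M₀) (K : ℕ)
    (N : ℕ → X →L[ℂ] X)
    (hN : ∀ n, N n = (E n).comp ((N n).comp (E n)))
    (hNbound : ∀ n, ‖N n‖ ≤ M₀)
    (hNnilp : ∀ n, (N n) ^ K = 0)
    (s : ℂ) (δ : ℝ)
    (hδ : δ = ⨅ n, ‖s - s' n‖)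
    (hδM₀ : M₀ < δ) :
    ∀ x : X,
      Summable (fun n => ∑ j ∈ Finset.range K,
        ((s - s' n)⁻¹ ^ (j + 1)) • ((N n) ^ j) (E n x)) ∧
      ‖∑' n, ∑ j ∈ Finset.range K,
          ((s - s' n)⁻¹ ^ (j + 1)) • ((N n) ^ j) (E n x)‖ ≤
        Real.sqrt (m₂ / m₁) / (δ - M₀) * ‖x‖ :=
  discrete_riesz_spectral_resolvent_bound_general E hproj hdisj m₁ m₂ hm₁ hsum hlower hupper s' M₀ K
    N hN hNbound s δ hδ hδM₀
end

section
/- Let X be a complex Hilbert space, d ≥ 1, let λ₁, …, λ_{d+1} ∈ ℂ be pairwise distinct with Re λ_{d+1} < 0, let e₁, …, e_{d+1} ∈ X, b₁, …, b_{d+1} ∈ ℂ^d, and m, m₁, m₂ > 0 be such that: (i) m₁·Σ_{n=1}^{d+1}|aₙ|² ≤ ‖Σ_{n=1}^{d+1} aₙeₙ‖² ≤ m₂·Σ_{n=1}^{d+1}|aₙ|² for every a ∈ ℂ^{d+1}; (ii) for every a ∈ ℂ^{d+1} with Σ_{n=1}^{d+1} aₙbₙ = 0 one has ‖Σ_{n=1}^{d+1}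 aₙ(λ_{d+1} − λₙ)eₙ‖² ≥ m·|Re λ_{d+1}|²·‖Σ_{n=1}^{d+1} aₙeₙ‖². Then Σ_{n=1}^{d} |λ_{d+1} − λₙ|² ≥ (m·m₁/m₂)·|Re λ_{d+1}|². (Core of Lemma 5.6: via the Hautus test for A* and B* with eigenvectors eₙ of A* to eigenvalues λₙ and bₙ = B*eₙ, any d+1 eigenvalues cannot all cluster in a ball of radius proportional to |Re λ|² around λ; hence in the ball of radius K·|Re s|² around each eigenvalue s lie at most d eigenvalues.) -/
/-!
More than `d` vectors `bₙ` in `ℂ^d` admit a nontrivial relation `∑ aₙ bₙ = 0`. Feeding this `a`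
into the Hautus inequality and sandwiching it between the Riesz bounds gives
`m |Re λ|² m₁ ‖a‖² ≤ m₂ ∑ |aₙ|² |λ - λₙ|² ≤ m₂ ‖a‖² ∑ |λ - λₙ|²`, and the term `n = d + 1` of the
last sum vanishes.
-/

open Module

theorem exists_ne_zero_sum_smul_eq_zero_of_finrank_lt_card {K V ι : Type*} [DivisionRing K]
    [AddCommGroup V] [Module K V] [FiniteDimensional K V] [Fintype ι] (v : ι → V)
    (h : finrank K V < Fintype.card ι) : ∃ a : ι → K, a ≠ 0 ∧ ∑ i, a i • v i = 0 := by
  have hdep : ¬ LinearIndependent K v := fun hli => h.not_ge hli.fintype_card_le_finrank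
  obtain ⟨a, hav, i, hai⟩ := Fintype.not_linearIndependent_iff.mp hdep
  exact ⟨a, fun ha => hai (congrFun ha i), hav⟩

theorem Finset.sum_norm_mul_sq_le {ι R : Type*} [NormedDivisionRing R] (s : Finset ι)
    (a c : ι → R) : ∑ i ∈ s, ‖a i * c i‖ ^ 2 ≤ (∑ i ∈ s, ‖a i‖ ^ 2) * ∑ i ∈ s, ‖c i‖ ^ 2 := by
  rw [Finset.mul_sum]
  refine Finset.sum_le_sum fun i hi => ?_
  rw [norm_mul, mul_pow]
  gcongr
  exact Finset.single_le_sum (f := fun j => ‖a j‖ ^ 2) (fun j _ => by positivity) hi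

theorem div_le_sum_norm_sq_of_riesz {ι X : Type*} [Fintype ι] [NormedAddCommGroup X]
    [Module ℂ X] {e : ι → X} {m₁ m₂ κ : ℝ}
    (hlower : ∀ a : ι → ℂ, m₁ * ∑ n, ‖a n‖ ^ 2 ≤ ‖∑ n, a n • e n‖ ^ 2)
    (hupper : ∀ a : ι → ℂ, ‖∑ n, a n • e n‖ ^ 2 ≤ m₂ * ∑ n, ‖a n‖ ^ 2)
    (hm₂ : 0 < m₂) (hκ : 0 ≤ κ) {a c : ι → ℂ} (ha : a ≠ 0)
    (hHautus : κ * ‖∑ n, a n • e n‖ ^ 2 ≤ ‖∑ n, (a n * c n) • e n‖ ^ 2) :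
    κ * m₁ / m₂ ≤ ∑ n, ‖c n‖ ^ 2 := by
  set S := ∑ n, ‖a n‖ ^ 2
  have hS : 0 < S := by
    obtain ⟨i, hai⟩ := Function.ne_iff.mp ha
    exact Finset.sum_pos' (fun n _ => by positivity) ⟨i, Finset.mem_univ i, by positivity⟩
  have key : κ * m₁ * S ≤ m₂ * (∑ n, ‖c n‖ ^ 2) * S :=
    calc κ * m₁ * S = κ * (m₁ * S) := by ring
      _ ≤ κ * ‖∑ n, a n • e n‖ ^ 2 := by gcongr; exact hlower a
      _ ≤ ‖∑ n, (a n * c n) • e n‖ ^ 2 := hHautus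
      _ ≤ m₂ * ∑ n, ‖a n * c n‖ ^ 2 := hupper _
      _ ≤ m₂ * (S * ∑ n, ‖c n‖ ^ 2) := by gcongr; exact Finset.sum_norm_mul_sq_le _ a c
      _ = m₂ * (∑ n, ‖c n‖ ^ 2) * S := by ring
  rw [div_le_iff₀ hm₂, mul_comm (∑ n, ‖c n‖ ^ 2)]
  exact le_of_mul_le_mul_right key hS

theorem eigenvalue_cluster_bound_general
    {X : Type*} [NormedAddCommGroup X] [InnerProductSpace ℂ X]
    (d : ℕ)
    (Λ : Fin (d + 1) → ℂ)
    (e : Fin (d + 1) → X)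
    (b : Fin (d + 1) → EuclideanSpace ℂ (Fin d))
    (m m₁ m₂ : ℝ) (hm : 0 < m) (hm₂ : 0 < m₂)
    (hRieszLower : ∀ a : Fin (d + 1) → ℂ,
      m₁ * ∑ n, ‖a n‖ ^ 2 ≤ ‖∑ n, a n • e n‖ ^ 2)
    (hRieszUpper : ∀ a : Fin (d + 1) → ℂ,
      ‖∑ n, a n • e n‖ ^ 2 ≤ m₂ * ∑ n, ‖a n‖ ^ 2)
    (hHautus : ∀ a : Fin (d + 1) → ℂ, (∑ n, a n • b n) = 0 →
      m * |(Λ (Fin.last d)).re| ^ 2 * ‖∑ n, a n • e n‖ ^ 2 ≤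
        ‖∑ n, (a n * (Λ (Fin.last d) - Λ n)) • e n‖ ^ 2) :
    (m * m₁ / m₂) * |(Λ (Fin.last d)).re| ^ 2 ≤
      ∑ n : Fin d, ‖Λ (Fin.last d) - Λ n.castSucc‖ ^ 2 := by
  obtain ⟨a, ha, hab⟩ := exists_ne_zero_sum_smul_eq_zero_of_finrank_lt_card (K := ℂ) b (by simp)
  calc (m * m₁ / m₂) * |(Λ (Fin.last d)).re| ^ 2
      = m * |(Λ (Fin.last d)).re| ^ 2 * m₁ / m₂ := by ring
    _ ≤ ∑ n, ‖Λ (Fin.last d) - Λ n‖ ^ 2 :=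
      div_le_sum_norm_sq_of_riesz hRieszLower hRieszUpper hm₂ (by positivity) ha (hHautus a hab)
    _ = ∑ n : Fin d, ‖Λ (Fin.last d) - Λ n.castSucc‖ ^ 2 := by simp [Fin.sum_univ_castSucc]

/-- **core of Lemma 5.6.** Via the Hautus test, `d+1` eigenvalues of the
adjoint cannot cluster: if `e₁,…,e_{d+1}` satisfy two-sided Riesz bounds (i), the Hautus-type
inequality (ii) holds on vectors annihilated by `b₁,…,b_{d+1} ∈ ℂ^d`, and the `λₙ` are
pairwise distinct with `Re λ_{d+1} < 0`, then
`Σ_{n=1}^{d} |λ_{d+1} − λₙ|² ≥ (m·m₁/m₂)·|Re λ_{d+1}|²`. -/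
theorem eigenvalue_cluster_bound
    {X : Type*} [NormedAddCommGroup X] [InnerProductSpace ℂ X]
    (d : ℕ) (hd : 1 ≤ d)
    (Λ : Fin (d + 1) → ℂ) (hΛinj : Function.Injective Λ)
    (hΛre : (Λ (Fin.last d)).re < 0)
    (e : Fin (d + 1) → X)
    (b : Fin (d + 1) → EuclideanSpace ℂ (Fin d))
    (m m₁ m₂ : ℝ) (hm : 0 < m) (hm₁ : 0 < m₁) (hm₂ : 0 < m₂)
    (hRieszLower : ∀ a : Fin (d + 1) → ℂ,
      m₁ * ∑ n, ‖a n‖ ^ 2 ≤ ‖∑ n, a n • e n‖ ^ 2)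
    (hRieszUpper : ∀ a : Fin (d + 1) → ℂ,
      ‖∑ n, a n • e n‖ ^ 2 ≤ m₂ * ∑ n, ‖a n‖ ^ 2)
    (hHautus : ∀ a : Fin (d + 1) → ℂ, (∑ n, a n • b n) = 0 →
      m * |(Λ (Fin.last d)).re| ^ 2 * ‖∑ n, a n • e n‖ ^ 2 ≤
        ‖∑ n, (a n * (Λ (Fin.last d) - Λ n)) • e n‖ ^ 2) :
    (m * m₁ / m₂) * |(Λ (Fin.last d)).re| ^ 2 ≤
      ∑ n : Fin d, ‖Λ (Fin.last d) - Λ n.castSucc‖ ^ 2 :=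
  eigenvalue_cluster_bound_general d Λ e b m m₁ m₂ hm hm₂ hRieszLower hRieszUpper hHautus
end

section
/- Let f : ℂ → ℂ be entire and not identically zero, and suppose: (i) there exist C₀, T ≥ 0 with |f(z)| ≤ C₀·e^{T·|z|} for all z ∈ ℂ; (ii) there exists h ≥ 0 such that every zero z of f satisfies |Im z| ≤ h; (iii) there exist ŵ ∈ ℝ and constants 0 < c ≤ C such that c ≤ |f(r + i·ŵ)| ≤ C for all r ∈ ℝ. Then there exist k ∈ ℕ and subsets Z₁, …, Z_k of ℂ, each having a uniform gap (i.e. inf{|z − w| : z, w ∈ Z_i, z ≠ w} > 0), whose union equals the zero set of f and such that each zero z of f belongs to exactly ord_z(f) of the sets Z₁, …, Z_k, where ord_z(f) is the order of z as a zero of f. (Proposition 5.3, Levin's theorem: the zeros of a sine-type function, counted with multiplicity, form a finite union of sets each having a uniform gap.) -/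
/-!
Phragmén–Lindelöf in the four quadrants, applied to `exp (± i T z) f (z + i w₀)`, shows that `f`
is bounded on every horizontal strip around the line `Im z = w₀`. Jensen's inequality on the disc
of radius `2ρ` about `j + i w₀`, where `‖f‖ ≥ c`, then bounds the number of zeros, counted with
multiplicity, in each box `⌊Re z⌋ = j` of the zero strip by one `N` independent of `j`. Inside a
box, the zeros receive pairwise disjoint sets of colours from `N` colours, `ord_z f` of them at `z`;
giving boxes of even and odd index separate palettes, two distinct zeros of the same colour lie in
boxes at least two apart, so their real parts differ by at least `1`. The colour classes are the
sets `Z i`.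
-/

open Set Finset Metric Real MeromorphicOn
open Complex (I abs_im_le_norm norm_le_abs_re_add_abs_im)

theorem Set.Finite.of_forall_finset_sum_le {α : Type*} {s : Set α} {m : α → ℕ} {N : ℕ}
    (hm : ∀ z ∈ s, 1 ≤ m z) (hN : ∀ F : Finset α, ↑F ⊆ s → ∑ z ∈ F, m z ≤ N) : s.Finite := by
  by_contra hs
  obtain ⟨F, hFs, hcard⟩ := Set.Infinite.exists_subset_card_eq hs (N + 1)
  have hF := F.card_nsmul_le_sum m 1 fun z hz => hm z (hFs hz)
  simp only [hcard, smul_eq_mul, mul_one] at hF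
  exact absurd (hF.trans (hN F hFs)) (by omega)

theorem Finset.exists_pairwiseDisjoint_card_eq {α : Type*} [DecidableEq α] (F : Finset α)
    (m : α → ℕ) :
    ∃ c : α → Finset ℕ, (∀ z ∈ F, #(c z) = m z ∧ c z ⊆ range (∑ w ∈ F, m w)) ∧
      (F : Set α).PairwiseDisjoint c := by
  induction F using Finset.induction_on with
  | empty => exact ⟨fun _ => ∅, by simp, by simp⟩
  | @insert a F ha ih =>
    obtain ⟨c, hc, hdisj⟩ := ih
    set s := ∑ w ∈ F, m w
    have hcF : ∀ z ∈ F, Function.update c a (Ico s (s + m a)) z = c z := fun z hz =>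
      Function.update_of_ne (ne_of_mem_of_not_mem hz ha) _ _
    refine ⟨Function.update c a (Ico s (s + m a)), fun z hz => ?_, ?_⟩
    · rw [sum_insert ha]
      rcases mem_insert.1 hz with rfl | hz
      · simp only [Function.update_self, Nat.card_Ico, add_tsub_cancel_left, true_and]
        intro k hk
        simp only [mem_Ico, mem_range] at hk ⊢
        omega
      · rw [hcF z hz]
        exact ⟨(hc z hz).1, (hc z hz).2.trans (range_subset_range.2 (by omega))⟩
    · rw [coe_insert]
      refine PairwiseDisjoint.insert (fun x hx y hy hxy => ?_) fun z hz _ => ?_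
      · simp only [Function.onFun, hcF x hx, hcF y hy]
        exact hdisj hx hy hxy
      · rw [Function.update_self, hcF z hz]
        refine disjoint_left.2 fun k hk hk' => ?_
        have := mem_range.1 ((hc z hz).2 hk')
        simp only [mem_Ico] at hk
        omega

section Coloring

variable {α β : Type*} {S : Set α} {m : α → ℕ} {N : ℕ}

theorem exists_coloring_of_block_sum_le (b : α → β) (hm : ∀ z ∈ S, 1 ≤ m z)
    (hN : ∀ j, ∀ F : Finset α, ↑F ⊆ {z ∈ S | b z = j} → ∑ z ∈ F, m z ≤ N) :
    ∃ c : α → Finset ℕ, (∀ z ∈ S, #(c z) = m z ∧ c z ⊆ range N) ∧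
      ∀ z ∈ S, ∀ w ∈ S, b z = b w → z ≠ w → Disjoint (c z) (c w) := by
  classical
  have hfin j : {z ∈ S | b z = j}.Finite :=
    .of_forall_finset_sum_le (fun z hz => hm z hz.1) (hN j)
  choose c hc hdisj using fun j => (hfin j).toFinset.exists_pairwiseDisjoint_card_eq m
  have hmem : ∀ z ∈ S, z ∈ (hfin (b z)).toFinset := by simp_all
  refine ⟨fun z => c (b z) z, fun z hz => ?_, fun z hz w hw hzw hne => ?_⟩
  · obtain ⟨hcard, hsub⟩ := hc (b z) z (hmem z hz)
    exact ⟨hcard, hsub.trans (range_subset_range.2 (hN (b z) _ (by simp)))⟩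
  · simpa [hzw] using hdisj (b z) (hmem z hz) (hzw ▸ hmem w hw) hne

theorem exists_parity_coloring_of_block_sum_le (b : α → ℤ) (hm : ∀ z ∈ S, 1 ≤ m z)
    (hN : ∀ j, ∀ F : Finset α, ↑F ⊆ {z ∈ S | b z = j} → ∑ z ∈ F, m z ≤ N) :
    ∃ d : α → Finset ℕ, (∀ z ∈ S, #(d z) = m z ∧ d z ⊆ range (2 * N)) ∧
      ∀ z ∈ S, ∀ w ∈ S, z ≠ w → ¬Disjoint (d z) (d w) → 2 ≤ |b z - b w| := by
  obtain ⟨c, hc, hdisj⟩ := exists_coloring_of_block_sum_le b hm hN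
  let parity (z : α) : ℕ := (b z % 2).toNat
  have hparity z : parity z < 2 := by simp only [parity]; omega
  refine ⟨fun z => (c z).image (2 * · + parity z), fun z hz => ⟨?_, ?_⟩, ?_⟩
  · rw [Finset.card_image_of_injective _ fun k l hkl => by omega, (hc z hz).1]
  · intro i hi
    obtain ⟨k, hk, rfl⟩ := mem_image.1 hi
    have := mem_range.1 ((hc z hz).2 hk)
    have := hparity z
    exact mem_range.2 (by omega)
  · intro z hz w hw hne hzw
    obtain ⟨i, hiz, hiw⟩ := not_disjoint_iff.1 hzw
    obtain ⟨k, hk, rfl⟩ := mem_image.1 hiz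
    obtain ⟨l, hl, hkl⟩ := mem_image.1 hiw
    have := hparity z
    have := hparity w
    obtain ⟨rfl, hp⟩ : l = k ∧ parity w = parity z := by omega
    by_cases hb : b z = b w
    · exact absurd (hdisj z hz w hw hb hne) (not_disjoint_iff.2 ⟨l, hk, hl⟩)
    · simp only [parity] at hp
      rw [le_abs]
      omega

end Coloring

theorem one_le_norm_sub_of_two_le_abs_floor_re_sub {z w : ℂ} (h : 2 ≤ |⌊z.re⌋ - ⌊w.re⌋|) :
    1 ≤ ‖z - w‖ := by
  have h' : (2 : ℝ) ≤ |(⌊z.re⌋ : ℝ) - ⌊w.re⌋| := by exact_mod_cast h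
  have hre : 1 ≤ |z.re - w.re| := by
    have := Int.floor_le z.re
    have := Int.lt_floor_add_one z.re
    have := Int.floor_le w.re
    have := Int.lt_floor_add_one w.re
    rw [le_abs] at h' ⊢
    rcases h' with h' | h' <;> [left; right] <;> linarith
  simpa using hre.trans (Complex.abs_re_le_norm (z - w))

theorem exists_one_separated_cover_of_block_sum_le {S : Set ℂ} {m : ℂ → ℕ} {N : ℕ}
    (hm : ∀ z ∈ S, 1 ≤ m z)
    (hN : ∀ j : ℤ, ∀ F : Finset ℂ, ↑F ⊆ {z ∈ S | ⌊z.re⌋ = j} → ∑ z ∈ F, m z ≤ N) :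
    ∃ Z : Fin (2 * N) → Set ℂ, (∀ i, ∀ z ∈ Z i, ∀ w ∈ Z i, z ≠ w → 1 ≤ ‖z - w‖) ∧
      (⋃ i, Z i) = S ∧ ∀ z ∈ S, Nat.card {i // z ∈ Z i} = m z := by
  obtain ⟨d, hd, hsep⟩ := exists_parity_coloring_of_block_sum_le (fun z => ⌊z.re⌋) hm hN
  have hlt z (hz : z ∈ S) : ∀ k ∈ d z, k < 2 * N := fun k hk => mem_range.1 ((hd z hz).2 hk)
  refine ⟨fun i => {z ∈ S | ↑i ∈ d z}, fun i z hz w hw hne => ?_, ?_, fun z hz => ?_⟩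
  · exact one_le_norm_sub_of_two_le_abs_floor_re_sub
      (hsep z hz.1 w hw.1 hne (not_disjoint_iff.2 ⟨i, hz.2, hw.2⟩))
  · refine Subset.antisymm (iUnion_subset fun i => sep_subset _ _) fun z hz => ?_
    obtain ⟨k, hk⟩ : (d z).Nonempty := card_pos.1 ((hd z hz).1 ▸ hm z hz)
    exact mem_iUnion.2 ⟨⟨k, hlt z hz k hk⟩, hz, hk⟩
  · rw [← (hd z hz).1, ← card_attachFin _ (hlt z hz), ← Nat.card_eq_finsetCard]
    exact Nat.card_congr (Equiv.subtypeEquivRight fun i => by simp [hz])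

theorem sum_analyticOrderNatAt_le {f : ℂ → ℂ} {c : ℂ} {r R M : ℝ} (hr : 0 < r) (hrR : r < R)
    (hM : 1 ≤ M) (hf : AnalyticOnNhd ℂ f (closedBall c R)) (hfc : f c ≠ 0)
    (hfM : ∀ z ∈ sphere c R, ‖f z‖ ≤ M) {F : Finset ℂ} (hF : ↑F ⊆ closedBall c r) :
    (∑ z ∈ F, analyticOrderNatAt f z : ℝ) ≤ log (M / ‖f c‖) / log (R / r) := by
  have hR : 0 < R := hr.trans hrR
  have hfr : AnalyticOnNhd ℂ f (closedBall c r) := hf.mono (closedBall_subset_closedBall hrR.le)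
  have hc : c ∈ closedBall c r := mem_closedBall_self hr.le
  have hord z (hz : z ∈ closedBall c r) : analyticOrderAt f z ≠ ⊤ :=
    hfr.analyticOrderAt_ne_top_of_isPreconnected (convex_closedBall c r).isPreconnected hc hz
      (by simp [(hfr c hc).analyticOrderAt_eq_zero.2 hfc])
  have hdiv z (hz : z ∈ F) : divisor f (closedBall c r) z = analyticOrderNatAt f z := by
    rw [hfr.divisor_apply (hF hz), ← Nat.cast_analyticOrderNatAt (hord z (hF hz))]
    simp
  have jensen := AnalyticOnNhd.sum_divisor_le (R := R) (abs_pos_of_pos hr)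
    (by rwa [abs_of_pos hr, abs_of_pos hR]) hM (by rwa [abs_of_pos hR]) hfc
    (by rwa [abs_of_pos hR])
  rw [abs_of_pos hr] at jensen
  refine le_trans ?_ jensen
  have hsupp := (divisor f (closedBall c r)).finiteSupport (isCompact_closedBall c r)
  classical
  rw [finsum_eq_sum_of_support_subset _ (s := F ∪ hsupp.toFinset) (by simp), Int.cast_sum]
  calc (∑ z ∈ F, (analyticOrderNatAt f z : ℝ))
      = ∑ z ∈ F, (divisor f (closedBall c r) z : ℝ) :=
        Finset.sum_congr rfl fun z hz => by rw [hdiv z hz, Int.cast_natCast]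
    _ ≤ _ := Finset.sum_le_sum_of_subset_of_nonneg Finset.subset_union_left
        fun z _ _ => by exact_mod_cast hfr.divisor_nonneg z

theorem norm_le_of_im_nonneg_of_norm_le_exp {u : ℂ → ℂ} (hu : Differentiable ℂ u) {A B M : ℝ}
    (hgrowth : ∀ z, ‖u z‖ ≤ A * Real.exp (B * ‖z‖)) (hre : ∀ x : ℝ, ‖u x‖ ≤ M)
    (him : ∀ y : ℝ, 0 ≤ y → ‖u (y * I)‖ ≤ M) {z : ℂ} (hz : 0 ≤ z.im) : ‖u z‖ ≤ M := by
  have hO : ∀ Q : Set ℂ, ∃ c < (2 : ℝ), ∃ B,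
      u =O[Bornology.cobounded ℂ ⊓ Filter.principal Q] fun z => Real.exp (B * ‖z‖ ^ c) :=
    fun Q => ⟨1, one_lt_two, B, .of_bound A <| .of_forall fun z => by simpa using hgrowth z⟩
  rcases le_total 0 z.re with hz_re | hz_re
  · exact PhragmenLindelof.quadrant_I hu.diffContOnCl (hO _) (fun x _ => hre x) him hz_re hz
  · exact PhragmenLindelof.quadrant_II hu.diffContOnCl (hO _) (fun x _ => hre x) him hz_re hz

theorem norm_le_mul_exp_im_of_im_nonneg {f : ℂ → ℂ} (hf : Differentiable ℂ f) {A T C : ℝ}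
    (hgrowth : ∀ z, ‖f z‖ ≤ A * Real.exp (T * ‖z‖)) (hre : ∀ x : ℝ, ‖f x‖ ≤ C) {z : ℂ}
    (hz : 0 ≤ z.im) : ‖f z‖ ≤ max C A * Real.exp (T * z.im) := by
  -- `exp (i T z) f z` has the same size as `f` on `ℝ` and is bounded by `A` on `i ℝ₊`
  set u : ℂ → ℂ := fun z => Complex.exp (T * I * z) * f z
  have hu_norm z : ‖u z‖ = Real.exp (-(T * z.im)) * ‖f z‖ := by
    simp [u, Complex.norm_exp, Complex.mul_re]
  have hA : 0 ≤ A := by simpa using (norm_nonneg _).trans (hgrowth 0)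
  have hu : ‖u z‖ ≤ max C A := by
    refine norm_le_of_im_nonneg_of_norm_le_exp (A := A) (B := 2 * |T|) (by fun_prop) (fun w => ?_)
      (fun x => ?_) (fun y hy => ?_) hz
    · have hw : -(T * w.im) ≤ |T| * ‖w‖ :=
        (neg_le_abs _).trans (by rw [abs_mul]; gcongr; exact abs_im_le_norm w)
      calc ‖u w‖ ≤ Real.exp (|T| * ‖w‖) * (A * Real.exp (|T| * ‖w‖)) := by
            rw [hu_norm]
            gcongr
            exact (hgrowth w).trans (by gcongr; exact le_abs_self T)
        _ = A * Real.exp (2 * |T| * ‖w‖) := by rw [mul_assoc, two_mul, Real.exp_add]; ring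
    · simpa [hu_norm] using (hre x).trans (le_max_left C A)
    · have hfy : ‖f (y * I)‖ ≤ A * Real.exp (T * y) := by
        simpa [abs_of_nonneg hy] using hgrowth (y * I)
      calc ‖u (y * I)‖ ≤ Real.exp (-(T * y)) * (A * Real.exp (T * y)) := by
            simpa [hu_norm] using mul_le_mul_of_nonneg_left hfy (Real.exp_pos _).le
        _ = A := by rw [mul_left_comm, ← Real.exp_add]; simp
        _ ≤ max C A := le_max_right C A
  calc ‖f z‖ = Real.exp (T * z.im) * ‖u z‖ := by
        rw [hu_norm, ← mul_assoc, ← Real.exp_add]; simp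
    _ ≤ max C A * Real.exp (T * z.im) := by rw [mul_comm]; gcongr

theorem norm_le_mul_exp_abs_im {f : ℂ → ℂ} (hf : Differentiable ℂ f) {A T C : ℝ}
    (hgrowth : ∀ z, ‖f z‖ ≤ A * Real.exp (T * ‖z‖)) (hre : ∀ x : ℝ, ‖f x‖ ≤ C) (z : ℂ) :
    ‖f z‖ ≤ max C A * Real.exp (T * |z.im|) := by
  rcases le_total 0 z.im with hz | hz
  · simpa [abs_of_nonneg hz] using norm_le_mul_exp_im_of_im_nonneg hf hgrowth hre hz
  · simpa [abs_of_nonpos hz] using norm_le_mul_exp_im_of_im_nonneg (f := fun z => f (-z))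
      (hf.comp differentiable_neg) (by simpa using fun z => hgrowth (-z))
      (fun x => by simpa using hre (-x)) (z := -z) (by simpa using hz)

theorem norm_comp_add_le_mul_exp {f : ℂ → ℂ} {A T : ℝ}
    (hgrowth : ∀ z, ‖f z‖ ≤ A * Real.exp (T * ‖z‖)) (a z : ℂ) :
    ‖f (z + a)‖ ≤ A * Real.exp (|T| * ‖a‖) * Real.exp (|T| * ‖z‖) := by
  have hA : 0 ≤ A := by simpa using (norm_nonneg _).trans (hgrowth 0)
  calc ‖f (z + a)‖ ≤ A * Real.exp (|T| * (‖z‖ + ‖a‖)) := by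
        refine (hgrowth _).trans ?_
        gcongr
        · exact le_abs_self T
        · exact norm_add_le z a
    _ = A * Real.exp (|T| * ‖a‖) * Real.exp (|T| * ‖z‖) := by
        rw [mul_add, Real.exp_add]; ring

theorem norm_le_mul_exp_abs_im_sub {f : ℂ → ℂ} (hf : Differentiable ℂ f) {A T C w₀ : ℝ}
    (hgrowth : ∀ z, ‖f z‖ ≤ A * Real.exp (T * ‖z‖)) (hline : ∀ x : ℝ, ‖f (x + w₀ * I)‖ ≤ C)
    (z : ℂ) : ‖f z‖ ≤ max C (A * Real.exp (|T| * |w₀|)) * Real.exp (|T| * |z.im - w₀|) := by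
  simpa using norm_le_mul_exp_abs_im (f := fun z => f (z + w₀ * I)) (by fun_prop)
    (norm_comp_add_le_mul_exp hgrowth _) hline (z - w₀ * I)

theorem norm_sub_floor_re_add_le (z : ℂ) (w₀ : ℝ) :
    ‖z - ((⌊z.re⌋ : ℝ) + w₀ * I)‖ ≤ 1 + |z.im - w₀| := by
  calc ‖z - ((⌊z.re⌋ : ℝ) + w₀ * I)‖ ≤ |Int.fract z.re| + |z.im - w₀| := by
        simpa [Int.self_sub_floor] using norm_le_abs_re_add_abs_im (z - ((⌊z.re⌋ : ℝ) + w₀ * I))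
    _ ≤ 1 + |z.im - w₀| := by
        rw [abs_of_nonneg (Int.fract_nonneg _)]
        gcongr
        exact (Int.fract_lt_one _).le

theorem sum_analyticOrderNatAt_le_of_norm_le_on_strip {f : ℂ → ℂ} (hf : Differentiable ℂ f)
    {w₀ c ρ K : ℝ} (hc : 0 < c) (hρ : 0 < ρ) (hline : ∀ x : ℝ, c ≤ ‖f (x + w₀ * I)‖)
    (hK : ∀ z : ℂ, |z.im - w₀| ≤ 2 * ρ → ‖f z‖ ≤ K) (x : ℝ) {F : Finset ℂ}
    (hF : ↑F ⊆ closedBall (x + w₀ * I) ρ) :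
    (∑ z ∈ F, analyticOrderNatAt f z : ℝ) ≤ log (max K 1 / c) / log 2 := by
  have hfc : c ≤ ‖f (x + w₀ * I)‖ := hline x
  have hsphere : ∀ z ∈ sphere (x + w₀ * I : ℂ) (2 * ρ), ‖f z‖ ≤ max K 1 := fun z hz =>
    (hK z (by simpa [← mem_sphere_iff_norm.1 hz] using abs_im_le_norm (z - (x + w₀ * I)))).trans
      (le_max_left K 1)
  refine (sum_analyticOrderNatAt_le hρ (by linarith) (le_max_right K 1)
    (fun z _ => hf.analyticAt z) (norm_pos_iff.1 (hc.trans_le hfc)) hsphere hF).trans ?_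
  rw [mul_div_cancel_right₀ 2 hρ.ne']
  gcongr
  exact div_pos (lt_max_of_lt_right one_pos) (hc.trans_le hfc)

theorem exists_block_sum_analyticOrderNatAt_le {f : ℂ → ℂ} (hf : Differentiable ℂ f)
    {C₀ T h w₀ c C : ℝ} (hgrowth : ∀ z, ‖f z‖ ≤ C₀ * Real.exp (T * ‖z‖))
    (hstrip : ∀ z, f z = 0 → |z.im| ≤ h) (hc : 0 < c)
    (hline : ∀ x : ℝ, c ≤ ‖f (x + w₀ * I)‖ ∧ ‖f (x + w₀ * I)‖ ≤ C) :
    ∃ N : ℕ, ∀ j : ℤ, ∀ F : Finset ℂ, ↑F ⊆ {z | f z = 0 ∧ ⌊z.re⌋ = j} →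
      ∑ z ∈ F, analyticOrderNatAt f z ≤ N := by
  set ρ := 1 + |h| + |w₀|
  have hρ : 0 < ρ := by positivity
  set M := max C (C₀ * Real.exp (|T| * |w₀|))
  have hM : 0 ≤ M := le_max_of_le_left ((norm_nonneg _).trans (hline 0).2)
  have hK z (hz : |z.im - w₀| ≤ 2 * ρ) : ‖f z‖ ≤ M * Real.exp (|T| * (2 * ρ)) :=
    (norm_le_mul_exp_abs_im_sub hf hgrowth (fun x => (hline x).2) z).trans (by gcongr)
  refine ⟨⌊log (max (M * Real.exp (|T| * (2 * ρ))) 1 / c) / log 2⌋₊, fun j F hF => Nat.le_floor ?_⟩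
  push_cast
  refine sum_analyticOrderNatAt_le_of_norm_le_on_strip hf hc hρ (fun x => (hline x).1) hK j
    fun z hz => ?_
  obtain ⟨hz0, rfl⟩ := hF hz
  rw [mem_closedBall, dist_eq_norm]
  refine (norm_sub_floor_re_add_le z w₀).trans ?_
  have := hstrip z hz0
  calc 1 + |z.im - w₀| ≤ 1 + (|z.im| + |w₀|) := by gcongr; exact abs_sub _ _
    _ ≤ ρ := by linarith [le_abs_self h]

theorem sine_type_zeros_finite_union_uniform_gap_general
    (f : ℂ → ℂ) (hf : Differentiable ℂ f)
    (C₀ T : ℝ)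
    (hgrowth : ∀ z : ℂ, ‖f z‖ ≤ C₀ * Real.exp (T * ‖z‖))
    (h : ℝ)
    (hstrip : ∀ z : ℂ, f z = 0 → |z.im| ≤ h)
    (w₀ c C : ℝ) (hc : 0 < c)
    (hline : ∀ r : ℝ, c ≤ ‖f (r + w₀ * Complex.I)‖ ∧
      ‖f (r + w₀ * Complex.I)‖ ≤ C) :
    ∃ (k : ℕ) (Z : Fin k → Set ℂ),
      (∀ i, ∃ ε > 0, ∀ z ∈ Z i, ∀ w ∈ Z i, z ≠ w → ε ≤ ‖z - w‖) ∧
      (⋃ i, Z i) = {z : ℂ | f z = 0} ∧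
      ∀ z : ℂ, f z = 0 → ∃ n : ℕ,
        Nat.card {i : Fin k // z ∈ Z i} = n ∧
        ∃ g : ℂ → ℂ, AnalyticAt ℂ g z ∧ g z ≠ 0 ∧
          ∀ᶠ w in nhds z, f w = (w - z) ^ n * g w := by
  have hfw₀ : f (w₀ * I) ≠ 0 := fun h0 => by simpa [h0] using hc.trans_le (hline 0).1
  have hord z : analyticOrderAt f z ≠ ⊤ :=
    AnalyticOnNhd.analyticOrderAt_ne_top_of_isPreconnected (fun z _ => hf.analyticAt z)
      isPreconnected_univ (mem_univ (w₀ * I)) (mem_univ z)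
      (by simp [(hf.analyticAt _).analyticOrderAt_eq_zero.2 hfw₀])
  have hpos : ∀ z ∈ {z | f z = 0}, 1 ≤ analyticOrderNatAt f z := fun z hz =>
    Nat.one_le_iff_ne_zero.2 fun h0 => (hf.analyticAt z).analyticOrderAt_eq_zero.1
      (by rw [← Nat.cast_analyticOrderNatAt (hord z), h0, Nat.cast_zero]) hz
  obtain ⟨N, hN⟩ := exists_block_sum_analyticOrderNatAt_le hf hgrowth hstrip hc hline
  obtain ⟨Z, hsep, hunion, hcard⟩ := exists_one_separated_cover_of_block_sum_le hpos hN
  refine ⟨2 * N, Z, fun i => ⟨1, one_pos, hsep i⟩, hunion, fun z hz => ⟨_, hcard z hz, ?_⟩⟩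
  exact (hf.analyticAt z).analyticOrderAt_ne_top.1 (hord z)

/-- **Proposition 5.3, Levin's theorem.** The zeros of a sine-type function,
counted with multiplicity, form a finite union of sets each having a uniform gap: if `f` is
entire, not identically zero, of exponential type, its zeros lie in a horizontal strip, and
`|f|` is bounded above and below away from zero on some horizontal line `Im z = ŵ`, then
there are finitely many sets `Z₁,…,Z_k ⊆ ℂ`, each with a uniform gap, whose union is the
zero set of `f`, such that each zero `z` belongs to exactly `ord_z(f)` of the sets. -/
theorem sine_type_zeros_finite_union_uniform_gap
    (f : ℂ → ℂ) (hf : Differentiable ℂ f) (hf0 : ∃ z, f z ≠ 0)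
    (C₀ T : ℝ) (hC₀ : 0 ≤ C₀) (hT : 0 ≤ T)
    (hgrowth : ∀ z : ℂ, ‖f z‖ ≤ C₀ * Real.exp (T * ‖z‖))
    (h : ℝ) (hh : 0 ≤ h)
    (hstrip : ∀ z : ℂ, f z = 0 → |z.im| ≤ h)
    (w₀ c C : ℝ) (hc : 0 < c) (hcC : c ≤ C)
    (hline : ∀ r : ℝ, c ≤ ‖f (r + w₀ * Complex.I)‖ ∧
      ‖f (r + w₀ * Complex.I)‖ ≤ C) :
    ∃ (k : ℕ) (Z : Fin k → Set ℂ),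
      (∀ i, ∃ ε > 0, ∀ z ∈ Z i, ∀ w ∈ Z i, z ≠ w → ε ≤ ‖z - w‖) ∧
      (⋃ i, Z i) = {z : ℂ | f z = 0} ∧
      ∀ z : ℂ, f z = 0 → ∃ n : ℕ,
        Nat.card {i : Fin k // z ∈ Z i} = n ∧
        ∃ g : ℂ → ℂ, AnalyticAt ℂ g z ∧ g z ≠ 0 ∧
          ∀ᶠ w in nhds z, f w = (w - z) ^ n * g w :=
  sine_type_zeros_finite_union_uniform_gap_general f hf C₀ T hgrowth h hstrip w₀ c C hc hline
end
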